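/- arXiv:1705.02766 — 10 statements merged into one kernel-verified Lean document; each statement's English description precedes it below -/
import Mathlib

section
/- Let f : ℝ^d → ℝ be differentiable with L-Lipschitz gradient, let 0 < σ ≤ L, and set κ = L/σ and ω = (√κ − 1)/(√κ + 1). Define iterates by x₀ = y₀ and, for t ≥ 1, y_t = x_{t−1} − (1/L)∇f(x_{t−1}) and x_t = y_t + ω(y_t − y_{t−1}). Fix w ∈ ℝ^d and t ≥ 1. If for every s = 0, 1, …, t−1 the inequality f(u) ≥ f(x_s) + ∇f(x_s)ᵀ(u − x_s) + (σ/2)‖u − x_s‖² holds for both u = w and u = y_s, then f(y_t) − f(w) ≤ (1 − 1/√κ)^t · ψ(w), where ψ(w) = f(y₀) − f(w) + (σ/2)‖w − y₀‖². -/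
/-!
Along the AGD iterates consider the auxiliary sequence `z_s = x_s + √κ (x_s - y_s)` and the
potential `V_s = f(y_s) - f(w) + σ/2 ‖z_s - w‖²`; since `x₀ = y₀`, `V₀ = ψ(w)`. With the momentum
`ω = (√κ - 1)/(√κ + 1)`, the update of `z` is the convex combination
`z_{s+1} = (1 - 1/√κ) z_s + (1/√κ) (x_s - ∇f(x_s)/σ)`. Expanding `‖z_{s+1} - w‖²` and combining the
descent lemma for the gradient step with the two strong-convexity inequalities at `x_s`
(weights `1/√κ` at `u = w` and `1 - 1/√κ` at `u = y_s`) gives `V_{s+1} ≤ (1 - 1/√κ) V_s`.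
-/

open scoped InnerProductSpace

section Descent

variable {E : Type*} [NormedAddCommGroup E] [InnerProductSpace ℝ E] [CompleteSpace E]

lemma HasGradientAt.hasDerivAt_comp_add_smul {f : E → ℝ} {G a v : E} {θ : ℝ}
    (h : HasGradientAt f G (a + θ • v)) :
    HasDerivAt (fun t : ℝ => f (a + t • v)) ⟪G, v⟫_ℝ θ := by
  have hline : HasDerivAt (fun t : ℝ => a + t • v) v θ := by
    simpa using ((hasDerivAt_id θ).smul_const v).const_add a
  exact (h.hasFDerivAt.comp_hasDerivAt θ hline).congr_deriv (by simp)

theorem le_add_inner_add_of_lipschitz_gradient {f : E → ℝ} {g : E → E} {L : ℝ}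
    (hgrad : ∀ x, HasGradientAt f (g x) x) (hlip : ∀ x y, ‖g x - g y‖ ≤ L * ‖x - y‖) (a b : E) :
    f b ≤ f a + ⟪g a, b - a⟫_ℝ + L / 2 * ‖b - a‖ ^ 2 := by
  set v := b - a
  set φ : ℝ → ℝ := fun θ => f (a + θ • v) - θ * ⟪g a, v⟫_ℝ
  have hφ : ∀ θ, HasDerivAt φ ⟪g (a + θ • v) - g a, v⟫_ℝ θ := fun θ => by
    rw [inner_sub_left]
    exact ((hgrad _).hasDerivAt_comp_add_smul).sub (hasDerivAt_mul_const ⟪g a, v⟫_ℝ)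
  have hB : ∀ θ, HasDerivAt (fun θ : ℝ => φ 0 + L / 2 * ‖v‖ ^ 2 * θ ^ 2) (L * θ * ‖v‖ ^ 2) θ :=
    fun θ => (((hasDerivAt_pow 2 θ).const_mul (L / 2 * ‖v‖ ^ 2)).const_add (φ 0)).congr_deriv
      (by ring)
  have hslope : ∀ θ ∈ Set.Ico (0 : ℝ) 1, ⟪g (a + θ • v) - g a, v⟫_ℝ ≤ L * θ * ‖v‖ ^ 2 :=
    fun θ hθ => calc
      ⟪g (a + θ • v) - g a, v⟫_ℝ ≤ ‖g (a + θ • v) - g a‖ * ‖v‖ := real_inner_le_norm _ _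
      _ ≤ L * ‖a + θ • v - a‖ * ‖v‖ := by gcongr; exact hlip _ _
      _ = L * θ * ‖v‖ ^ 2 := by
        rw [add_sub_cancel_left, norm_smul, Real.norm_of_nonneg hθ.1]; ring
  have h1 := image_le_of_deriv_right_le_deriv_boundary
    (B := fun θ => φ 0 + L / 2 * ‖v‖ ^ 2 * θ ^ 2)
    (fun θ _ => (hφ θ).continuousAt.continuousWithinAt) (fun θ _ => (hφ θ).hasDerivWithinAt)
    (le_add_of_nonneg_right (by simp)) (fun θ _ => (hB θ).continuousAt.continuousWithinAt)
    (fun θ _ => (hB θ).hasDerivWithinAt) hslope (Set.right_mem_Icc.2 zero_le_one)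
  simp only [φ, one_smul, zero_smul, add_zero, one_mul, zero_mul, sub_zero, one_pow, mul_one] at h1
  rw [add_sub_cancel] at h1
  linarith

theorem gradient_step_le {f : E → ℝ} {g : E → E} {L : ℝ}
    (hgrad : ∀ x, HasGradientAt f (g x) x) (hlip : ∀ x y, ‖g x - g y‖ ≤ L * ‖x - y‖)
    (hL : 0 < L) (a : E) :
    f (a - (1 / L) • g a) ≤ f a - 1 / (2 * L) * ‖g a‖ ^ 2 := by
  have h := le_add_inner_add_of_lipschitz_gradient hgrad hlip a (a - (1 / L) • g a)
  rw [sub_sub_cancel_left, inner_neg_right, real_inner_smul_right, real_inner_self_eq_norm_sq,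
    norm_neg, norm_smul, Real.norm_of_nonneg (by positivity)] at h
  convert h using 1
  field_simp
  ring

end Descent

lemma agd_extrapolation_eq {V : Type*} [AddCommGroup V] [Module ℝ V] {σ q : ℝ} (hσ : σ ≠ 0)
    (hq : 0 < q) {x y y' x' G : V} (hy' : y' = x - (1 / (σ * q ^ 2)) • G)
    (hx' : x' = y' + ((q - 1) / (q + 1)) • (y' - y)) :
    x' + q • (x' - y') = (1 - 1 / q) • (x + q • (x - y)) + (1 / q) • (x - (1 / σ) • G) := by
  subst hy' hx'
  match_scalars <;> field_simp <;> ring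

lemma agd_potential_contraction {E : Type*} [NormedAddCommGroup E] [InnerProductSpace ℝ E]
    {σ q fx fy fy' fw : ℝ} (hσ : 0 < σ) (hq : 1 ≤ q) {x y w G : E}
    (hdesc : fy' ≤ fx - 1 / (2 * (σ * q ^ 2)) * ‖G‖ ^ 2)
    (hw : fw ≥ fx + ⟪G, w - x⟫_ℝ + σ / 2 * ‖w - x‖ ^ 2)
    (hy : fy ≥ fx + ⟪G, y - x⟫_ℝ + σ / 2 * ‖y - x‖ ^ 2) :
    fy' - fw + σ / 2 * ‖(1 - 1 / q) • (x + q • (x - y)) + (1 / q) • (x - (1 / σ) • G) - w‖ ^ 2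
      ≤ (1 - 1 / q) * (fy - fw + σ / 2 * ‖x + q • (x - y) - w‖ ^ 2) := by
  have hq0 : q ≠ 0 := by positivity
  have hnext : (1 - 1 / q) • (x + q • (x - y)) + (1 / q) • (x - (1 / σ) • G) - w
      = -((w - x) + (q - 1) • (y - x) + (1 / (q * σ)) • G) := by
    match_scalars <;> field_simp
    ring
  have hcurr : x + q • (x - y) - w = -((w - x) + q • (y - x)) := by module
  rw [hnext, hcurr, norm_neg, norm_neg]
  set a := w - x
  set b := y - x
  simp only [← real_inner_self_eq_norm_sq, inner_add_left, inner_add_right, real_inner_smul_left,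
    real_inner_smul_right, real_inner_comm a b, real_inner_comm a G, real_inner_comm b G]
    at hdesc hw hy ⊢
  have hτ : 0 ≤ 1 - 1 / q := sub_nonneg.2 ((div_le_one₀ (by positivity)).2 hq)
  have hy' := mul_le_mul_of_nonneg_left hy hτ
  have hb : 0 ≤ (1 - 1 / q) * (q + 1) * ⟪b, b⟫_ℝ :=
    mul_nonneg (mul_nonneg hτ (by linarith)) real_inner_self_nonneg
  -- what remains after the weighted sum is an identity of rational functions in `q` and `σ`
  linear_combination (norm := (apply le_of_eq; field_simp; ring))
    (1 / q) * hw + hy' + hdesc + (σ / 2) * hb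

theorem agd_until_proven_guilty_convergence_general
    {d : ℕ} (f : EuclideanSpace ℝ (Fin d) → ℝ)
    (g : EuclideanSpace ℝ (Fin d) → EuclideanSpace ℝ (Fin d))
    (L σ : ℝ) (hσ : 0 < σ) (hσL : σ ≤ L)
    (hgrad : ∀ x, HasGradientAt f (g x) x)
    (hlip : ∀ x y, ‖g x - g y‖ ≤ L * ‖x - y‖)
    (κ ω : ℝ) (hκ : κ = L / σ)
    (hω : ω = (Real.sqrt κ - 1) / (Real.sqrt κ + 1))
    (x y : ℕ → EuclideanSpace ℝ (Fin d))
    (hx0 : x 0 = y 0)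
    (hy : ∀ t : ℕ, y (t + 1) = x t - (1 / L) • g (x t))
    (hx : ∀ t : ℕ, x (t + 1) = y (t + 1) + ω • (y (t + 1) - y t))
    (w : EuclideanSpace ℝ (Fin d)) (t : ℕ)
    (hconv : ∀ s, s < t → ∀ u ∈ ({w, y s} : Set (EuclideanSpace ℝ (Fin d))),
      f u ≥ f (x s) + ⟪g (x s), u - x s⟫_ℝ + σ / 2 * ‖u - x s‖ ^ 2) :
    f (y t) - f w ≤ (1 - 1 / Real.sqrt κ) ^ t *
      (f (y 0) - f w + σ / 2 * ‖w - y 0‖ ^ 2) := by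
  set q := Real.sqrt κ
  have hL : 0 < L := hσ.trans_le hσL
  have hq : 1 ≤ q := Real.one_le_sqrt.2 (hκ ▸ (one_le_div hσ).2 hσL)
  have hLq : L = σ * q ^ 2 := by
    rw [Real.sq_sqrt (hκ ▸ by positivity), hκ]
    field_simp
  set z : ℕ → EuclideanSpace ℝ (Fin d) := fun s => x s + q • (x s - y s)
  set V : ℕ → ℝ := fun s => f (y s) - f w + σ / 2 * ‖z s - w‖ ^ 2
  have hstep : ∀ s < t, V (s + 1) ≤ (1 - 1 / q) * V s := fun s hs => by
    have hz : z (s + 1) = (1 - 1 / q) • z s + (1 / q) • (x s - (1 / σ) • g (x s)) :=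
      agd_extrapolation_eq hσ.ne' (by positivity) (hLq ▸ hy s) (hω ▸ hx s)
    have hdesc := hy s ▸ gradient_step_le hgrad hlip hL (x s)
    rw [hLq] at hdesc
    simp only [V, hz]
    exact agd_potential_contraction hσ hq hdesc (hconv s hs w (by simp))
      (hconv s hs (y s) (by simp))
  have hV0 : V 0 = f (y 0) - f w + σ / 2 * ‖w - y 0‖ ^ 2 := by
    simp [V, z, hx0, norm_sub_rev]
  calc f (y t) - f w ≤ V t := le_add_of_nonneg_right (by positivity)
    _ ≤ (1 - 1 / q) ^ t * V 0 :=
      le_geom (sub_nonneg.2 ((div_le_one₀ (by positivity)).2 hq)) t hstep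
    _ = _ := by rw [hV0]

/-- Proposition 1 (AGD convergence under local strong-convexity inequalities). -/
theorem agd_until_proven_guilty_convergence
    {d : ℕ} (f : EuclideanSpace ℝ (Fin d) → ℝ)
    (g : EuclideanSpace ℝ (Fin d) → EuclideanSpace ℝ (Fin d))
    (L σ : ℝ) (hσ : 0 < σ) (hσL : σ ≤ L)
    (hgrad : ∀ x, HasGradientAt f (g x) x)
    (hlip : ∀ x y, ‖g x - g y‖ ≤ L * ‖x - y‖)
    (κ ω : ℝ) (hκ : κ = L / σ)
    (hω : ω = (Real.sqrt κ - 1) / (Real.sqrt κ + 1))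
    (x y : ℕ → EuclideanSpace ℝ (Fin d))
    (hx0 : x 0 = y 0)
    (hy : ∀ t : ℕ, y (t + 1) = x t - (1 / L) • g (x t))
    (hx : ∀ t : ℕ, x (t + 1) = y (t + 1) + ω • (y (t + 1) - y t))
    (w : EuclideanSpace ℝ (Fin d)) (t : ℕ) (ht : 1 ≤ t)
    (hconv : ∀ s, s < t → ∀ u ∈ ({w, y s} : Set (EuclideanSpace ℝ (Fin d))),
      f u ≥ f (x s) + ⟪g (x s), u - x s⟫_ℝ + σ / 2 * ‖u - x s‖ ^ 2) :
    f (y t) - f w ≤ (1 - 1 / Real.sqrt κ) ^ t *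
      (f (y 0) - f w + σ / 2 * ‖w - y 0‖ ^ 2) :=
  agd_until_proven_guilty_convergence_general f g L σ hσ hσL hgrad hlip κ ω hκ hω x y hx0 hy hx w t
    hconv
end

section
/- Let f : ℝ^d → ℝ be differentiable, let 0 < σ ≤ L, set κ = L/σ, and let x₀, x₁, x₂, … be any sequence in ℝ^d. Define the quadratic estimate functions Φ₀(z) = f(x₀) + (σ/2)‖z − x₀‖² and Φ_{s+1}(z) = (1 − 1/√κ)Φ_s(z) + (1/√κ)[f(x_s) + ∇f(x_s)ᵀ(z − x_s) + (σ/2)‖z − x_s‖²]. Fix w ∈ ℝ^d and t ≥ 0. If for every s = 0, 1, …, t−1 it holds that f(w) ≥ f(x_s) + ∇f(x_s)ᵀ(w − x_s) + (σ/2)‖w − x_s‖², then Φ_t(w) ≤ f(w) + (1 − 1/√κ)^t · ψ(w), where ψ(w) = f(x₀) − f(w) + (σ/2)‖w − x₀‖². -/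
open scoped InnerProductSpace

/-- Upper bound on the Nesterov estimate functions Φ_t at a point w satisfying the
local strong-convexity inequalities along the iterates. -/
theorem estimate_sequence_upper_bound
    {d : ℕ} (f : EuclideanSpace ℝ (Fin d) → ℝ)
    (g : EuclideanSpace ℝ (Fin d) → EuclideanSpace ℝ (Fin d))
    (L σ : ℝ) (hσ : 0 < σ) (hσL : σ ≤ L)
    (hgrad : ∀ x, HasGradientAt f (g x) x)
    (κ : ℝ) (hκ : κ = L / σ)
    (x : ℕ → EuclideanSpace ℝ (Fin d))
    (Φ : ℕ → EuclideanSpace ℝ (Fin d) → ℝ)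
    (hΦ0 : ∀ z, Φ 0 z = f (x 0) + σ / 2 * ‖z - x 0‖ ^ 2)
    (hΦ : ∀ s z, Φ (s + 1) z = (1 - 1 / Real.sqrt κ) * Φ s z +
      (1 / Real.sqrt κ) * (f (x s) + ⟪g (x s), z - x s⟫_ℝ + σ / 2 * ‖z - x s‖ ^ 2))
    (w : EuclideanSpace ℝ (Fin d)) (t : ℕ)
    (hconv : ∀ s, s < t →
      f w ≥ f (x s) + ⟪g (x s), w - x s⟫_ℝ + σ / 2 * ‖w - x s‖ ^ 2) :
    Φ t w ≤ f w + (1 - 1 / Real.sqrt κ) ^ t *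
      (f (x 0) - f w + σ / 2 * ‖w - x 0‖ ^ 2) := by
  have hκ1 : (1:ℝ) ≤ κ := by
    rw [hκ]; exact (one_le_div hσ).mpr hσL
  have hs1 : (1:ℝ) ≤ Real.sqrt κ := by
    rw [show (1:ℝ) = Real.sqrt 1 by simp]
    exact Real.sqrt_le_sqrt hκ1
  have hq : 0 ≤ 1 - 1 / Real.sqrt κ := by
    have : 1 / Real.sqrt κ ≤ 1 := by
      rw [div_le_one (lt_of_lt_of_le one_pos hs1)]; exact hs1
    linarith
  induction t with
  | zero => rw [hΦ0 w]; ring_nf; simp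
  | succ s ih =>
    have ih' := ih (fun k hk => hconv k (Nat.lt_succ_of_lt hk))
    have hc := hconv s (Nat.lt_succ_self s)
    rw [hΦ s w]
    have h1 : (1 - 1 / Real.sqrt κ) * Φ s w ≤
        (1 - 1 / Real.sqrt κ) * (f w + (1 - 1 / Real.sqrt κ) ^ s *
          (f (x 0) - f w + σ / 2 * ‖w - x 0‖ ^ 2)) := mul_le_mul_of_nonneg_left ih' hq
    have hqpos : 0 < 1 / Real.sqrt κ := by positivity
    have h2 : (1 / Real.sqrt κ) * (f (x s) + ⟪g (x s), w - x s⟫_ℝ + σ / 2 * ‖w - x s‖ ^ 2)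
        ≤ (1 / Real.sqrt κ) * f w := mul_le_mul_of_nonneg_left hc (le_of_lt hqpos)
    calc (1 - 1 / Real.sqrt κ) * Φ s w +
          (1 / Real.sqrt κ) * (f (x s) + ⟪g (x s), w - x s⟫_ℝ + σ / 2 * ‖w - x s‖ ^ 2)
        ≤ (1 - 1 / Real.sqrt κ) * (f w + (1 - 1 / Real.sqrt κ) ^ s *
            (f (x 0) - f w + σ / 2 * ‖w - x 0‖ ^ 2)) + (1 / Real.sqrt κ) * f w :=
          add_le_add h1 h2
      _ = f w + (1 - 1 / Real.sqrt κ) ^ (s + 1) *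
            (f (x 0) - f w + σ / 2 * ‖w - x 0‖ ^ 2) := by ring
end

section
/- Let f : ℝ^d → ℝ be differentiable with L-Lipschitz gradient, let 0 < σ ≤ L, set κ = L/σ and ω = (√κ − 1)/(√κ + 1), and define iterates by x₀ = y₀ and, for s ≥ 1, y_s = x_{s−1} − (1/L)∇f(x_{s−1}) and x_s = y_s + ω(y_s − y_{s−1}). Define the estimate functions Φ₀(z) = f(x₀) + (σ/2)‖z − x₀‖² and Φ_{s+1}(z) = (1 − 1/√κ)Φ_s(z) + (1/√κ)[f(x_s) + ∇f(x_s)ᵀ(z − x_s) + (σ/2)‖z − x_s‖²]. Fix t ≥ 0. If for every s = 0, 1, …, t−1 it holds that f(y_s) ≥ f(x_s) + ∇f(x_s)ᵀ(y_s − x_s) + (σ/2)‖y_s − x_s‖², then f(y_t) ≤ min_{z ∈ ℝ^d} Φ_t(z). -/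
open scoped InnerProductSpace

/-!
Each `Φ s` is the σ-quadratic `p s + σ / 2 * ‖z - v s‖ ^ 2` with vertex `v s = x s + √κ • (x s - y s)`:
a convex combination of two σ-quadratics is again one, and the momentum `ω` is exactly what makes
the vertex of the combination equal to `x (s + 1) + √κ • (x (s + 1) - y (s + 1))`. Then
`f (y s) ≤ p s` by induction: the descent lemma gives
`f (y (s + 1)) ≤ f (x s) - ‖∇f (x s)‖ ^ 2 / (2 * L)`, and the strong-convexity inequality at `y s`,
combined with `f (y s) ≤ p s`, bounds this by the recursion for `p (s + 1)`.
-/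

section

variable {E : Type*} [NormedAddCommGroup E] [InnerProductSpace ℝ E]

theorem le_add_inner_add_sq_of_lipschitz_gradient [CompleteSpace E] {f : E → ℝ} {g : E → E}
    {L : ℝ} (hgrad : ∀ x, HasGradientAt f (g x) x) (hlip : ∀ x y, ‖g x - g y‖ ≤ L * ‖x - y‖)
    (a b : E) : f b ≤ f a + ⟪g a, b - a⟫_ℝ + L / 2 * ‖b - a‖ ^ 2 := by
  set φ : ℝ → ℝ := fun t => f (a + t • (b - a)) - t * ⟪g a, b - a⟫_ℝ - L / 2 * t ^ 2 * ‖b - a‖ ^ 2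
  have hφ : ∀ t, HasDerivAt φ
      (⟪g (a + t • (b - a)), b - a⟫_ℝ - ⟪g a, b - a⟫_ℝ - L * t * ‖b - a‖ ^ 2) t := by
    intro t
    have hline : HasDerivAt (fun t : ℝ => a + t • (b - a)) (b - a) t := by
      simpa using ((hasDerivAt_id t).smul_const (b - a)).const_add a
    refine ((((hgrad _).hasFDerivAt.comp_hasDerivAt t hline).sub
      ((hasDerivAt_id t).mul_const ⟪g a, b - a⟫_ℝ)).sub
      (((hasDerivAt_pow 2 t).const_mul (L / 2)).mul_const (‖b - a‖ ^ 2))).congr_deriv ?_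
    simp only [InnerProductSpace.toDual_apply_apply]
    ring
  have hanti : AntitoneOn φ (Set.Ici 0) := by
    refine antitoneOn_of_hasDerivWithinAt_nonpos (convex_Ici 0)
      (fun t _ => (hφ t).continuousAt.continuousWithinAt) (fun t _ => (hφ t).hasDerivWithinAt) ?_
    intro t ht
    rw [interior_Ici, Set.mem_Ioi] at ht
    have hcs := real_inner_le_norm (g (a + t • (b - a)) - g a) (b - a)
    have hL := hlip (a + t • (b - a)) a
    rw [add_sub_cancel_left, norm_smul, Real.norm_of_nonneg ht.le, inner_sub_left] at *
    nlinarith [mul_le_mul_of_nonneg_right hL (norm_nonneg (b - a))]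
  have h10 : φ 1 ≤ φ 0 := hanti Set.self_mem_Ici (zero_le_one' ℝ) zero_le_one
  simp only [φ, one_smul, zero_smul, add_sub_cancel, add_zero] at h10
  linarith

theorem le_sub_norm_sq_of_gradient_step [CompleteSpace E] {f : E → ℝ} {g : E → E}
    {L : ℝ} (hL : 0 < L) (hgrad : ∀ x, HasGradientAt f (g x) x)
    (hlip : ∀ x y, ‖g x - g y‖ ≤ L * ‖x - y‖) (a : E) :
    f (a - (1 / L) • g a) ≤ f a - 1 / (2 * L) * ‖g a‖ ^ 2 := by
  have h := le_add_inner_add_sq_of_lipschitz_gradient hgrad hlip a (a - (1 / L) • g a)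
  rw [sub_sub_cancel_left, inner_neg_right, real_inner_smul_right, real_inner_self_eq_norm_sq,
    norm_neg, norm_smul, Real.norm_of_nonneg (by positivity)] at h
  convert h using 1
  field_simp
  ring

theorem convex_comb_estimate_eq {σ : ℝ} (hσ : σ ≠ 0) (θ P F : ℝ) (V X G z : E) :
    (1 - θ) * (P + σ / 2 * ‖z - V‖ ^ 2) + θ * (F + ⟪G, z - X⟫_ℝ + σ / 2 * ‖z - X‖ ^ 2)
      = (1 - θ) * P + θ * F + θ * (1 - θ) * (σ / 2 * ‖X - V‖ ^ 2 + ⟪G, V - X⟫_ℝ)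
          - θ ^ 2 / (2 * σ) * ‖G‖ ^ 2
        + σ / 2 * ‖z - ((1 - θ) • V + θ • X - (θ / σ) • G)‖ ^ 2 := by
  simp only [← real_inner_self_eq_norm_sq, inner_sub_left, inner_sub_right, inner_add_left,
    inner_add_right, real_inner_smul_left, real_inner_smul_right]
  rw [real_inner_comm V z, real_inner_comm X z, real_inner_comm G z, real_inner_comm X V,
    real_inner_comm G V, real_inner_comm G X]
  field_simp
  ring

theorem le_estimate_min_succ {θ σ p F : ℝ} {X Y V G : E} (hθ0 : 0 ≤ θ) (hθ1 : θ ≤ 1)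
    (hσ : 0 ≤ σ) (hV : θ • (V - X) = X - Y) (hp : F + ⟪G, Y - X⟫_ℝ ≤ p) :
    F ≤ (1 - θ) * p + θ * F + θ * (1 - θ) * (σ / 2 * ‖X - V‖ ^ 2 + ⟪G, V - X⟫_ℝ) := by
  have hinner : θ * ⟪G, V - X⟫_ℝ = -⟪G, Y - X⟫_ℝ := by
    rw [← real_inner_smul_right, hV, ← inner_neg_right, neg_sub]
  have hsq : 0 ≤ θ * (1 - θ) * (σ / 2 * ‖X - V‖ ^ 2) := by
    have : 0 ≤ 1 - θ := by linarith
    positivity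
  linear_combination mul_le_mul_of_nonneg_left hp (sub_nonneg.2 hθ1) - (1 - θ) * hinner + hsq

theorem agd_vertex_succ {q σ L ω : ℝ} (hq : 0 < q) (hσ : 0 < σ) (hL : q ^ 2 * σ = L)
    (hω : ω = (q - 1) / (q + 1)) {x y x' y' g : E} (hy' : y' = x - (1 / L) • g)
    (hx' : x' = y' + ω • (y' - y)) :
    x' + q • (x' - y') = (1 - 1 / q) • (x + q • (x - y)) + (1 / q) • x - ((1 / q) / σ) • g := by
  subst hx' hy' hω hL
  match_scalars <;> field_simp <;> ring

end

/-- The AGD iterate y_t lies below the minimum of the Nesterov estimate function Φ_t,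
provided the local strong-convexity inequalities hold at u = y_s for s < t. -/
theorem agd_below_estimate_sequence_min
    {d : ℕ} (f : EuclideanSpace ℝ (Fin d) → ℝ)
    (g : EuclideanSpace ℝ (Fin d) → EuclideanSpace ℝ (Fin d))
    (L σ : ℝ) (hσ : 0 < σ) (hσL : σ ≤ L)
    (hgrad : ∀ x, HasGradientAt f (g x) x)
    (hlip : ∀ x y, ‖g x - g y‖ ≤ L * ‖x - y‖)
    (κ ω : ℝ) (hκ : κ = L / σ)
    (hω : ω = (Real.sqrt κ - 1) / (Real.sqrt κ + 1))
    (x y : ℕ → EuclideanSpace ℝ (Fin d))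
    (hx0 : x 0 = y 0)
    (hy : ∀ s : ℕ, y (s + 1) = x s - (1 / L) • g (x s))
    (hx : ∀ s : ℕ, x (s + 1) = y (s + 1) + ω • (y (s + 1) - y s))
    (Φ : ℕ → EuclideanSpace ℝ (Fin d) → ℝ)
    (hΦ0 : ∀ z, Φ 0 z = f (x 0) + σ / 2 * ‖z - x 0‖ ^ 2)
    (hΦ : ∀ s z, Φ (s + 1) z = (1 - 1 / Real.sqrt κ) * Φ s z +
      (1 / Real.sqrt κ) * (f (x s) + ⟪g (x s), z - x s⟫_ℝ + σ / 2 * ‖z - x s‖ ^ 2))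
    (t : ℕ)
    (hconv : ∀ s, s < t →
      f (y s) ≥ f (x s) + ⟪g (x s), y s - x s⟫_ℝ + σ / 2 * ‖y s - x s‖ ^ 2) :
    ∀ z, f (y t) ≤ Φ t z := by
  have hL : 0 < L := hσ.trans_le hσL
  have hq1 : 1 ≤ √κ := Real.one_le_sqrt.2 (hκ ▸ (one_le_div hσ).2 hσL)
  have hq0 : 0 < √κ := one_pos.trans_le hq1
  have hqL : √κ ^ 2 * σ = L := by rw [Real.sq_sqrt (hκ ▸ by positivity), hκ]; field_simp
  set v : ℕ → EuclideanSpace ℝ (Fin d) := fun s => x s + √κ • (x s - y s)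
  set θ := 1 / √κ with hθ
  have hv : ∀ s, v (s + 1) = (1 - θ) • v s + θ • x s - (θ / σ) • g (x s) := fun s =>
    agd_vertex_succ hq0 hσ hqL hω (hy s) (hx s)
  have hθ1 : θ ≤ 1 := (div_le_one hq0).2 hq1
  have hvθ : ∀ s, θ • (v s - x s) = x s - y s := fun s => by
    simp only [v, add_sub_cancel_left, smul_smul, hθ, one_div_mul_cancel hq0.ne', one_smul]
  have hmin : ∀ s ≤ t, ∃ p, f (y s) ≤ p ∧ ∀ z, Φ s z = p + σ / 2 * ‖z - v s‖ ^ 2 := by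
    intro s
    induction s with
    | zero => exact fun _ => ⟨f (x 0), by rw [hx0], fun z => by simp [hΦ0, v, hx0]⟩
    | succ s ih =>
      intro hs
      obtain ⟨p, hfp, hΦp⟩ := ih (by omega)
      refine ⟨_, ?_, fun z => by rw [hΦ, hΦp, convex_comb_estimate_eq hσ.ne', hv]⟩
      calc f (y (s + 1)) ≤ f (x s) - 1 / (2 * L) * ‖g (x s)‖ ^ 2 := by
            rw [hy]; exact le_sub_norm_sq_of_gradient_step hL hgrad hlip (x s)
        _ = f (x s) - θ ^ 2 / (2 * σ) * ‖g (x s)‖ ^ 2 := by rw [hθ, ← hqL]; field_simp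
        _ ≤ _ := by
          refine sub_le_sub_right (le_estimate_min_succ (by positivity) hθ1 hσ.le (hvθ s) ?_) _
          have hsq : 0 ≤ σ / 2 * ‖y s - x s‖ ^ 2 := by positivity
          linarith [hconv s hs]
  intro z
  obtain ⟨p, hfp, hΦp⟩ := hmin t le_rfl
  have hsq : 0 ≤ σ / 2 * ‖z - v t‖ ^ 2 := by positivity
  linarith [hΦp z]
end

section
/- Let f : ℝ^d → ℝ be twice differentiable with ρ-Lipschitz continuous Hessian, let α > 0, and let u, v ∈ ℝ^d with u ≠ v satisfy f(u) < f(v) + ∇f(v)ᵀ(u − v) − (α/2)‖u − v‖². If ‖u − v‖ ≤ α/(2ρ), then for every 0 < η ≤ α/ρ, setting δ = (u − v)/‖u − v‖, the point z ∈ {u + ηδ, u − ηδ} with smaller f-value satisfies f(z) ≤ f(u) − αη²/12. -/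
/-!
Restrict `f` to the line through `v` and `u`. If the second directional derivative along
`δ = (u - v)/‖u - v‖` stayed `≥ -α` on the segment `[v, u]`, `f u` would lie above the quadratic
lower model at `v`; so it drops below `-α` somewhere on the segment, and since `‖u - v‖ ≤ α/(2ρ)`
the Lipschitz Hessian keeps it below `-α/2` at `u`. The cubic Taylor bounds at `u` in the two
directions `±δ` then add up, the first-order terms cancelling, to
`f (u + ηδ) + f (u - ηδ) ≤ 2 f u - αη²/6` as soon as `ρη ≤ α`.
-/

open Set
open scoped InnerProductSpace

theorem le_of_hasDerivAt_of_second_deriv_nonpos {p q r : ℝ → ℝ} {b : ℝ} (hb : 0 ≤ b)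
    (hp : ∀ t, HasDerivAt p (q t) t) (hq : ∀ t, HasDerivAt q (r t) t)
    (hq0 : q 0 ≤ 0) (hr : ∀ t ∈ Icc 0 b, r t ≤ 0) :
    p b ≤ p 0 := by
  have hq_anti : AntitoneOn q (Icc 0 b) :=
    antitoneOn_of_hasDerivWithinAt_nonpos (convex_Icc 0 b)
      (fun t _ ↦ (hq t).continuousAt.continuousWithinAt)
      (fun t _ ↦ (hq t).hasDerivWithinAt)
      (fun t ht ↦ hr t (interior_subset ht))
  have hq_nonpos : ∀ t ∈ interior (Icc 0 b), q t ≤ 0 := fun t ht ↦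
    (hq_anti (left_mem_Icc.2 hb) (interior_subset ht) (interior_subset ht).1).trans hq0
  have hp_anti : AntitoneOn p (Icc 0 b) :=
    antitoneOn_of_hasDerivWithinAt_nonpos (convex_Icc 0 b)
      (fun t _ ↦ (hp t).continuousAt.continuousWithinAt)
      (fun t _ ↦ (hp t).hasDerivWithinAt) hq_nonpos
  exact hp_anti (left_mem_Icc.2 hb) (right_mem_Icc.2 hb) hb

theorem le_taylor_cubic_of_second_deriv_le {φ φ' φ'' : ℝ → ℝ} {a c T : ℝ} (hT : 0 ≤ T)
    (hφ : ∀ t, HasDerivAt φ (φ' t) t) (hφ' : ∀ t, HasDerivAt φ' (φ'' t) t)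
    (hle : ∀ t ∈ Icc 0 T, φ'' t ≤ a + c * t) :
    φ T ≤ φ 0 + φ' 0 * T + a * T ^ 2 / 2 + c * T ^ 3 / 6 := by
  have hpoly' (t : ℝ) :
      HasDerivAt (fun s ↦ φ' 0 + a * s + c * s ^ 2 / 2) (a + c * t) t := by
    refine ((((hasDerivAt_id' t).const_mul a).const_add (φ' 0)).add
      (((hasDerivAt_pow 2 t).const_mul c).div_const 2)).congr_deriv ?_
    norm_num; ring
  have hpoly (t : ℝ) : HasDerivAt (fun s ↦ φ' 0 * s + a * s ^ 2 / 2 + c * s ^ 3 / 6)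
      (φ' 0 + a * t + c * t ^ 2 / 2) t := by
    refine ((((hasDerivAt_id' t).const_mul (φ' 0)).add
        (((hasDerivAt_pow 2 t).const_mul a).div_const 2)).add
        (((hasDerivAt_pow 3 t).const_mul c).div_const 6)).congr_deriv ?_
    norm_num; ring
  have := le_of_hasDerivAt_of_second_deriv_nonpos hT (fun t ↦ (hφ t).sub (hpoly t))
    (fun t ↦ (hφ' t).sub (hpoly' t)) (by simp) (fun t ht ↦ by linarith [hle t ht])
  simp only [Pi.sub_apply, mul_zero, ne_eq, OfNat.ofNat_ne_zero, not_false_eq_true,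
    zero_pow, zero_div, add_zero, sub_zero] at this
  linarith

section AlongLine

variable {E : Type*} [NormedAddCommGroup E] [InnerProductSpace ℝ E]
  {f : E → ℝ} {g : E → E} {H : E → E →L[ℝ] E}

theorem hasDerivAt_add_smul (x δ : E) (t : ℝ) : HasDerivAt (fun s : ℝ ↦ x + s • δ) δ t := by
  simpa using ((hasDerivAt_id t).smul_const δ).const_add x

theorem hasDerivAt_comp_add_smul [CompleteSpace E] (hf : ∀ x, HasGradientAt f (g x) x)
    (x δ : E) (t : ℝ) :
    HasDerivAt (fun s : ℝ ↦ f (x + s • δ)) ⟪g (x + t • δ), δ⟫_ℝ t := by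
  have := (hf (x + t • δ)).hasFDerivAt.comp_hasDerivAt t (hasDerivAt_add_smul x δ t)
  simp only [Function.comp_def, InnerProductSpace.toDual_apply_apply] at this
  exact this

theorem hasDerivAt_inner_comp_add_smul (hg : ∀ x, HasFDerivAt g (H x) x) (x δ : E) (t : ℝ) :
    HasDerivAt (fun s : ℝ ↦ ⟪g (x + s • δ), δ⟫_ℝ) ⟪H (x + t • δ) δ, δ⟫_ℝ t := by
  simpa using ((hg (x + t • δ)).comp_hasDerivAt t (hasDerivAt_add_smul x δ t)).inner ℝ
    (hasDerivAt_const t δ)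

theorem inner_apply_sub_inner_apply_le {ρ : ℝ} (hH : ∀ x y, ‖H x - H y‖ ≤ ρ * ‖x - y‖)
    {δ : E} (hδ : ‖δ‖ = 1) (x y : E) :
    ⟪H x δ, δ⟫_ℝ - ⟪H y δ, δ⟫_ℝ ≤ ρ * ‖x - y‖ := by
  calc ⟪H x δ, δ⟫_ℝ - ⟪H y δ, δ⟫_ℝ = ⟪(H x - H y) δ, δ⟫_ℝ := by
        rw [← inner_sub_left]; rfl
    _ ≤ ‖(H x - H y) δ‖ * ‖δ‖ := real_inner_le_norm _ _
    _ ≤ ‖H x - H y‖ * ‖δ‖ * ‖δ‖ := by gcongr; exact (H x - H y).le_opNorm δ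
    _ ≤ ρ * ‖x - y‖ := by rw [hδ, mul_one, mul_one]; exact hH x y

theorem le_taylor_cubic_along_line [CompleteSpace E] (hf : ∀ x, HasGradientAt f (g x) x)
    (hg : ∀ x, HasFDerivAt g (H x) x) {ρ : ℝ} (hH : ∀ x y, ‖H x - H y‖ ≤ ρ * ‖x - y‖)
    {δ : E} (hδ : ‖δ‖ = 1) (x : E) {η : ℝ} (hη : 0 ≤ η) :
    f (x + η • δ) ≤ f x + η * ⟪g x, δ⟫_ℝ + η ^ 2 / 2 * ⟪H x δ, δ⟫_ℝ + ρ * η ^ 3 / 6 := by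
  have := le_taylor_cubic_of_second_deriv_le hη (hasDerivAt_comp_add_smul hf x δ)
    (hasDerivAt_inner_comp_add_smul hg x δ) (a := ⟪H x δ, δ⟫_ℝ) (c := ρ) fun t ht ↦ by
      have hlip := inner_apply_sub_inner_apply_le hH hδ (x + t • δ) x
      rw [add_sub_cancel_left, norm_smul, hδ, mul_one, Real.norm_of_nonneg ht.1] at hlip
      linarith
  simp only [zero_smul, add_zero] at this
  linarith

theorem exists_inner_apply_lt_of_lt_quadratic [CompleteSpace E]
    (hf : ∀ x, HasGradientAt f (g x) x) (hg : ∀ x, HasFDerivAt g (H x) x) {α r : ℝ} {v δ : E}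
    (hr : 0 ≤ r)
    (hlt : f (v + r • δ) < f v + r * ⟪g v, δ⟫_ℝ - α / 2 * r ^ 2) :
    ∃ θ ∈ Icc 0 r, ⟪H (v + θ • δ) δ, δ⟫_ℝ < -α := by
  by_contra! hge
  have := le_taylor_cubic_of_second_deriv_le hr (a := α) (c := 0)
    (fun t ↦ (hasDerivAt_comp_add_smul hf v δ t).neg)
    (fun t ↦ (hasDerivAt_inner_comp_add_smul hg v δ t).neg)
    fun t ht ↦ by linarith [hge t ht]
  simp only [Pi.neg_apply, zero_smul, add_zero] at this
  linarith

theorem min_le_sub_of_inner_apply_lt [CompleteSpace E] (hf : ∀ x, HasGradientAt f (g x) x)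
    (hg : ∀ x, HasFDerivAt g (H x) x) {ρ α η : ℝ} (hH : ∀ x y, ‖H x - H y‖ ≤ ρ * ‖x - y‖)
    {x δ : E} (hδ : ‖δ‖ = 1) (hcurv : ⟪H x δ, δ⟫_ℝ < -α / 2) (hη : 0 ≤ η) (hρη : ρ * η ≤ α) :
    min (f (x + η • δ)) (f (x - η • δ)) ≤ f x - α * η ^ 2 / 12 := by
  have hplus := le_taylor_cubic_along_line hf hg hH hδ x hη
  have hminus := le_taylor_cubic_along_line hf hg hH (δ := -δ) (by rwa [norm_neg]) x hη
  rw [smul_neg, ← sub_eq_add_neg, inner_neg_right, map_neg, inner_neg_neg] at hminus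
  have hcubic : ρ * η ^ 3 ≤ α * η ^ 2 := by
    rw [pow_succ', ← mul_assoc]; exact mul_le_mul_of_nonneg_right hρη (sq_nonneg η)
  have hsq : η ^ 2 / 2 * ⟪H x δ, δ⟫_ℝ ≤ η ^ 2 / 2 * (-α / 2) := by gcongr
  rw [min_le_iff]
  by_contra! h
  linarith [h.1, h.2]

end AlongLine

theorem exploit_nc_pair_progress_general
    {d : ℕ} (f : EuclideanSpace ℝ (Fin d) → ℝ)
    (g : EuclideanSpace ℝ (Fin d) → EuclideanSpace ℝ (Fin d))
    (hess : EuclideanSpace ℝ (Fin d) →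
      (EuclideanSpace ℝ (Fin d) →L[ℝ] EuclideanSpace ℝ (Fin d)))
    (ρ : ℝ) (hρ : 0 < ρ)
    (hgrad : ∀ x, HasGradientAt f (g x) x)
    (hhess : ∀ x, HasFDerivAt g (hess x) x)
    (hhlip : ∀ x y, ‖hess x - hess y‖ ≤ ρ * ‖x - y‖)
    (α : ℝ)
    (u v : EuclideanSpace ℝ (Fin d)) (huv : u ≠ v)
    (hpair : f u < f v + ⟪g v, u - v⟫_ℝ - α / 2 * ‖u - v‖ ^ 2)
    (hdist : ‖u - v‖ ≤ α / (2 * ρ))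
    (η : ℝ) (hη0 : 0 < η) (hη : η ≤ α / ρ) :
    min (f (u + η • (‖u - v‖⁻¹ • (u - v)))) (f (u - η • (‖u - v‖⁻¹ • (u - v))))
      ≤ f u - α * η ^ 2 / 12 := by
  have hr : 0 < ‖u - v‖ := norm_pos_iff.2 (sub_ne_zero.2 huv)
  set r := ‖u - v‖
  set δ := r⁻¹ • (u - v)
  have hδ : ‖δ‖ = 1 := norm_smul_inv_norm (sub_ne_zero.2 huv)
  have hsub : u - v = r • δ := (smul_inv_smul₀ hr.ne' _).symm
  have hu : u = v + r • δ := by rw [← hsub, add_sub_cancel]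
  rw [hsub, real_inner_smul_right] at hpair
  obtain ⟨θ, hθ, hcurvθ⟩ :=
    exists_inner_apply_lt_of_lt_quadratic hgrad hhess hr.le (hu ▸ hpair)
  have hcurv : ⟪hess u δ, δ⟫_ℝ < -α / 2 := by
    have hθu : ‖u - (v + θ • δ)‖ = r - θ := by
      rw [hu, add_sub_add_left_eq_sub, ← sub_smul, norm_smul, hδ, mul_one,
        Real.norm_of_nonneg (sub_nonneg.2 hθ.2)]
    have hρr : ρ * r ≤ α / 2 := by
      rw [le_div_iff₀ (by positivity)] at hdist; linarith
    have hlip := inner_apply_sub_inner_apply_le hhlip hδ u (v + θ • δ)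
    rw [hθu] at hlip
    nlinarith [mul_nonneg hρ.le hθ.1]
  exact min_le_sub_of_inner_apply_lt hgrad hhess hhlip hδ hcurv hη0.le
    (by rwa [le_div_iff₀ hρ, mul_comm] at hη)

/-- Exploiting a witness pair (u, v) of non-convexity: a step of size η from u in the
direction ±(u − v)/‖u − v‖ decreases the function value by at least αη²/12. -/
theorem exploit_nc_pair_progress
    {d : ℕ} (f : EuclideanSpace ℝ (Fin d) → ℝ)
    (g : EuclideanSpace ℝ (Fin d) → EuclideanSpace ℝ (Fin d))
    (hess : EuclideanSpace ℝ (Fin d) →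
      (EuclideanSpace ℝ (Fin d) →L[ℝ] EuclideanSpace ℝ (Fin d)))
    (ρ : ℝ) (hρ : 0 < ρ)
    (hgrad : ∀ x, HasGradientAt f (g x) x)
    (hhess : ∀ x, HasFDerivAt g (hess x) x)
    (hhlip : ∀ x y, ‖hess x - hess y‖ ≤ ρ * ‖x - y‖)
    (α : ℝ) (hα : 0 < α)
    (u v : EuclideanSpace ℝ (Fin d)) (huv : u ≠ v)
    (hpair : f u < f v + ⟪g v, u - v⟫_ℝ - α / 2 * ‖u - v‖ ^ 2)
    (hdist : ‖u - v‖ ≤ α / (2 * ρ))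
    (η : ℝ) (hη0 : 0 < η) (hη : η ≤ α / ρ) :
    min (f (u + η • (‖u - v‖⁻¹ • (u - v)))) (f (u - η • (‖u - v‖⁻¹ • (u - v))))
      ≤ f u - α * η ^ 2 / 12 :=
  exploit_nc_pair_progress_general f g hess ρ hρ hgrad hhess hhlip α u v huv hpair hdist η hη0 hη
end

section
/- Let f : ℝ^d → ℝ be differentiable, let α > 0, ε > 0, q ∈ ℝ^d, and define f̂(x) = f(x) + α‖x − q‖². Suppose p ∈ ℝ^d satisfies ‖∇f̂(p)‖ ≤ ε/10, ‖∇f(p)‖ > ε, and f̂(p) ≤ f(q). Then f(p) ≤ f(q) − ε²/(5α). -/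
/-- Proximal-point progress: if p nearly minimizes f̂ = f + α‖· − q‖², has large
gradient of f, and f̂(p) ≤ f(q), then f(p) ≤ f(q) − ε²/(5α). -/
theorem prox_point_progress
    {d : ℕ} (f : EuclideanSpace ℝ (Fin d) → ℝ)
    (g : EuclideanSpace ℝ (Fin d) → EuclideanSpace ℝ (Fin d))
    (hgrad : ∀ x, HasGradientAt f (g x) x)
    (α ε : ℝ) (hα : 0 < α) (hε : 0 < ε)
    (q : EuclideanSpace ℝ (Fin d))
    (fhat : EuclideanSpace ℝ (Fin d) → ℝ)
    (ghat : EuclideanSpace ℝ (Fin d) → EuclideanSpace ℝ (Fin d))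
    (hfhat : ∀ x, fhat x = f x + α * ‖x - q‖ ^ 2)
    (hghat : ∀ x, ghat x = g x + (2 * α) • (x - q))
    (hghat' : ∀ x, HasGradientAt fhat (ghat x) x)
    (p : EuclideanSpace ℝ (Fin d))
    (h1 : ‖ghat p‖ ≤ ε / 10) (h2 : ‖g p‖ > ε) (h3 : fhat p ≤ f q) :
    f p ≤ f q - ε ^ 2 / (5 * α) := by
  have h4 : g p = ghat p - (2 * α) • (p - q) := by
    rw [hghat p]; abel
  have h5 : ‖g p‖ ≤ ‖ghat p‖ + 2 * α * ‖p - q‖ := by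
    calc ‖g p‖ = ‖ghat p - (2 * α) • (p - q)‖ := by rw [← h4]
    _ ≤ ‖ghat p‖ + ‖(2 * α) • (p - q)‖ := norm_sub_le _ _
    _ = ‖ghat p‖ + 2 * α * ‖p - q‖ := by
        rw [norm_smul, Real.norm_eq_abs, abs_of_pos (by linarith)]
  have ht : 2 * α * ‖p - q‖ > 9 * ε / 10 := by linarith
  have ht0 : (0:ℝ) ≤ ‖p - q‖ := norm_nonneg _
  have key : ε ^ 2 / (5 * α) ≤ α * ‖p - q‖ ^ 2 := by
    rw [div_le_iff₀ (by positivity)]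
    nlinarith [sq_nonneg (2 * α * ‖p - q‖ - 9 * ε / 10)]
  have := hfhat p
  linarith
end

section
/- Let f : ℝ^d → ℝ have L₃-Lipschitz third-order derivatives, let u ∈ ℝ^d, let δ ∈ ℝ^d be a unit vector, and let α > 0. If δᵀ∇²f(u)δ = −α/2, then for every 0 ≤ η ≤ √(3α/L₃), min{f(u − ηδ), f(u + ηδ)} ≤ f(u) − αη²/8. -/
/-!
Along the line `h θ = f (u + θ • δ)`, a third derivative that is `L₃`-Lipschitz grows at most
linearly, and integrating this three times from `0` bounds `h` on `[0, ∞)` by its cubic Taylor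
polynomial plus `L₃ θ⁴ / 24`. Adding the same bound for `θ ↦ h (-θ)` cancels the odd terms:
`h η + h (-η) ≤ 2 h 0 + h''(0) η² + L₃ η⁴ / 12`. With `h''(0) = -α/2` and `L₃ η² ≤ 3α` the
right-hand side is at most `2 h 0 - α η² / 4`, so one of `h η`, `h (-η)` is at most `h 0 - α η² / 8`.
-/

open Finset Nat

lemma hasDerivAt_pow_succ_div_factorial (k : ℕ) (t : ℝ) :
    HasDerivAt (fun s : ℝ => s ^ (k + 1) / (k + 1)!) (t ^ k / k !) t :=
  ((hasDerivAt_pow (k + 1) t).div_const _).congr_deriv <| by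
    rw [Nat.factorial_succ, Nat.add_sub_cancel]
    push_cast
    field_simp

lemma le_taylor_add_of_iteratedDeriv_sub_le {L : ℝ} :
    ∀ (n : ℕ) {h : ℝ → ℝ}, ContDiff ℝ n h →
      (∀ x, 0 ≤ x → iteratedDeriv n h x - iteratedDeriv n h 0 ≤ L * x) →
      ∀ t, 0 ≤ t → h t ≤ ∑ k ∈ range (n + 1), iteratedDeriv k h 0 * (t ^ k / k !) +
        L * (t ^ (n + 1) / (n + 1)!)
  | 0, h, _, hbound, t, ht => by
    simpa [sub_le_iff_le_add, add_comm] using hbound t ht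
  | n + 1, h, hh, hbound, t, ht => by
    obtain ⟨hdiff, -, hderiv⟩ := contDiff_succ_iff_deriv.mp (by simpa using hh)
    have hderiv_le := le_taylor_add_of_iteratedDeriv_sub_le n hderiv
      (by simpa only [← iteratedDeriv_succ'] using hbound)
    have hpoly : ∀ x, HasDerivAt
        (fun s => ∑ k ∈ range (n + 2), iteratedDeriv k h 0 * (s ^ k / k !) +
          L * (s ^ (n + 2) / (n + 2)!))
        (∑ k ∈ range (n + 1), iteratedDeriv k (deriv h) 0 * (x ^ k / k !) +
          L * (x ^ (n + 1) / (n + 1)!)) x := by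
      intro x
      simp only [sum_range_succ' _ (n + 1), ← iteratedDeriv_succ', pow_zero, factorial_zero,
        cast_one, div_one, mul_one]
      exact ((HasDerivAt.fun_sum fun k _ =>
        (hasDerivAt_pow_succ_div_factorial k x).const_mul _).add_const _).fun_add
          ((hasDerivAt_pow_succ_div_factorial (n + 1) x).const_mul L)
    exact image_le_of_deriv_right_le_deriv_boundary (f' := deriv h) (a := 0) (b := t)
      hdiff.continuous.continuousOn (fun x _ => (hdiff x).hasDerivAt.hasDerivWithinAt)
      (by simp [sum_range_succ']) (fun x _ => (hpoly x).continuousAt.continuousWithinAt)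
      (fun x _ => (hpoly x).hasDerivWithinAt) (fun x hx => hderiv_le x hx.1) ⟨ht, le_rfl⟩

lemma add_apply_neg_le_of_lipschitz_iteratedDeriv_three {h : ℝ → ℝ} {L : ℝ}
    (hh : ContDiff ℝ 3 h)
    (hlip : ∀ θ₁ θ₂, |iteratedDeriv 3 h θ₁ - iteratedDeriv 3 h θ₂| ≤ L * |θ₁ - θ₂|)
    {t : ℝ} (ht : 0 ≤ t) :
    h t + h (-t) ≤ 2 * h 0 + iteratedDeriv 2 h 0 * t ^ 2 + L * t ^ 4 / 12 := by
  have hfwd := le_taylor_add_of_iteratedDeriv_sub_le (L := L) 3 hh (fun x hx => by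
    simpa [abs_of_nonneg hx] using (abs_le.mp (hlip x 0)).2) t ht
  have hbwd := le_taylor_add_of_iteratedDeriv_sub_le (L := L) 3 (h := fun x => h (-x))
    (hh.comp contDiff_neg) (fun x hx => by
      have := (abs_le.mp (hlip 0 (-x))).2
      norm_num [iteratedDeriv_comp_neg, abs_of_nonneg hx] at this ⊢
      linarith) t ht
  simp only [sum_range_succ, sum_range_zero, iteratedDeriv_comp_neg] at hfwd hbwd
  norm_num [factorial] at hfwd hbwd
  linarith

/-- Under third-order smoothness, negative curvature −α/2 in a unit direction δ at u
allows a step of size up to √(3α/L₃) decreasing f by αη²/8. -/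
theorem negative_curvature_step_third_order
    {d : ℕ} (f : EuclideanSpace ℝ (Fin d) → ℝ)
    (L₃ : ℝ) (hL₃ : 0 < L₃)
    (hdiff : ContDiff ℝ 3 f)
    (hlip : ∀ (x₀ δ : EuclideanSpace ℝ (Fin d)), ‖δ‖ = 1 → ∀ θ₁ θ₂ : ℝ,
      |iteratedDeriv 3 (fun θ : ℝ => f (x₀ + θ • δ)) θ₁ -
        iteratedDeriv 3 (fun θ : ℝ => f (x₀ + θ • δ)) θ₂| ≤ L₃ * |θ₁ - θ₂|)
    (u δ : EuclideanSpace ℝ (Fin d)) (hδ : ‖δ‖ = 1)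
    (α : ℝ) (hα : 0 < α)
    (hcurv : iteratedDeriv 2 (fun θ : ℝ => f (u + θ • δ)) 0 = -α / 2) :
    ∀ η : ℝ, 0 ≤ η → η ≤ Real.sqrt (3 * α / L₃) →
      min (f (u - η • δ)) (f (u + η • δ)) ≤ f u - α * η ^ 2 / 8 := by
  intro η hη hηle
  have hsum := add_apply_neg_le_of_lipschitz_iteratedDeriv_three
    (h := fun θ => f (u + θ • δ)) (hdiff.comp (by fun_prop)) (hlip u δ hδ) hη
  simp only [hcurv, neg_smul, ← sub_eq_add_neg, zero_smul, add_zero] at hsum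
  have hstep : L₃ * η ^ 2 ≤ 3 * α := by
    rw [← le_div_iff₀' hL₃, ← Real.le_sqrt hη (by positivity)]
    exact hηle
  have hquartic : L₃ * η ^ 2 * η ^ 2 ≤ 3 * α * η ^ 2 :=
    mul_le_mul_of_nonneg_right hstep (sq_nonneg η)
  linarith [min_le_left (f (u - η • δ)) (f (u + η • δ)),
    min_le_right (f (u - η • δ)) (f (u + η • δ))]
end

section
/- Let h : ℝ → ℝ be three times differentiable with L-Lipschitz continuous third derivative for some L > 0, and suppose h(1) − h(−1) − 2h'(−1) ≤ −A for some A ≥ 0. Then for any ρ ≥ 4, setting ρ' = √(ρ(ρ+2)) − 2, it holds that min{h(−1 − ρ), h(1 + ρ')} ≤ max{h(−1) − (A/4)ρ², h(1) − (A/6)ρ²} + (L/8)ρ⁴. -/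
/-!
Expand `h` to third order at `-1`. Integrating `|h'''(-1 + u) - h'''(-1)| ≤ L |u|` three times
bounds the Taylor remainder by `L t⁴ / 24`. At `t = 2` the hypothesis becomes the curvature
bound `h''(-1) + (2/3) h'''(-1) ≤ -A/2 + L/3`. With `s = √(ρ(ρ+2))`, the cubic model
`a t + b t²/2 + c t³/6` at `t = -ρ`, and at `t = s` compared with `t = 2`, exceeds its curvature
part by `-ρ (a + c s²/6)` and `(s - 2)(a + c s²/6)` respectively, so for either sign of
`a + c s²/6` one of the two steps gains at least the curvature term.
-/

theorem abs_le_of_hasDerivAt_of_abs_le_mul_pow_of_nonneg {f g : ℝ → ℝ} {C : ℝ} {k : ℕ}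
    (hf : ∀ u, HasDerivAt f (g u) u) (hf0 : f 0 = 0) (hg : ∀ u, |g u| ≤ C * |u| ^ k)
    {t : ℝ} (ht : 0 ≤ t) : |f t| ≤ C * t ^ (k + 1) / (k + 1) := by
  have hB (u : ℝ) : HasDerivAt (fun u ↦ C * u ^ (k + 1) / (k + 1)) (C * u ^ k) u := by
    refine (((hasDerivAt_pow (k + 1) u).const_mul C).div_const ((k : ℝ) + 1)).congr_deriv ?_
    have hk : (k : ℝ) + 1 ≠ 0 := by positivity
    push_cast [Nat.add_sub_cancel]
    field_simp
  refine image_norm_le_of_norm_deriv_right_le_deriv_boundary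
    (fun u _ ↦ (hf u).continuousAt.continuousWithinAt) (fun u _ ↦ (hf u).hasDerivWithinAt)
    (by simp [hf0]) hB (fun u hu ↦ ?_) ⟨ht, le_rfl⟩
  simpa [abs_of_nonneg hu.1] using hg u

theorem abs_le_of_hasDerivAt_of_abs_le_mul_pow {f g : ℝ → ℝ} {C : ℝ} {k : ℕ}
    (hf : ∀ u, HasDerivAt f (g u) u) (hf0 : f 0 = 0) (hg : ∀ u, |g u| ≤ C * |u| ^ k)
    (t : ℝ) : |f t| ≤ C * |t| ^ (k + 1) / (k + 1) := by
  rcases le_total 0 t with ht | ht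
  · simpa [abs_of_nonneg ht] using abs_le_of_hasDerivAt_of_abs_le_mul_pow_of_nonneg hf hf0 hg ht
  · have hf_neg (u : ℝ) : HasDerivAt (fun u ↦ f (-u)) (-g (-u)) u := by
      simpa [Function.comp_def] using (hf (-u)).comp u (hasDerivAt_neg u)
    simpa [abs_of_nonpos ht] using abs_le_of_hasDerivAt_of_abs_le_mul_pow_of_nonneg hf_neg
      (by simpa using hf0) (fun u ↦ by simpa using hg (-u)) (neg_nonneg.mpr ht)

theorem abs_sub_taylor_cubic_le {h : ℝ → ℝ} {L x : ℝ}
    (hd1 : Differentiable ℝ h) (hd2 : Differentiable ℝ (deriv h))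
    (hd3 : Differentiable ℝ (deriv (deriv h)))
    (hlip : ∀ y, |deriv (deriv (deriv h)) y - deriv (deriv (deriv h)) x| ≤ L * |y - x|)
    (t : ℝ) :
    |h (x + t) - (h x + deriv h x * t + deriv (deriv h) x * t ^ 2 / 2
      + deriv (deriv (deriv h)) x * t ^ 3 / 6)| ≤ L * t ^ 4 / 24 := by
  have shift {F : ℝ → ℝ} (hF : Differentiable ℝ F) (u : ℝ) :
      HasDerivAt (fun v ↦ F (x + v)) (deriv F (x + u)) u :=
    (hF (x + u)).hasDerivAt.comp_const_add x u
  set h₁ := deriv h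
  set h₂ := deriv h₁
  set h₃ := deriv h₂
  have hR₂ (u : ℝ) : HasDerivAt (fun v ↦ h₂ (x + v) - h₂ x - h₃ x * v) (h₃ (x + u) - h₃ x) u :=
    (((shift hd3 u).sub_const _).sub ((hasDerivAt_id u).const_mul _)).congr_deriv (by simp [h₃])
  have hR₁ (u : ℝ) : HasDerivAt (fun v ↦ h₁ (x + v) - h₁ x - h₂ x * v - h₃ x * v ^ 2 / 2)
      (h₂ (x + u) - h₂ x - h₃ x * u) u :=
    ((((shift hd2 u).sub_const _).sub ((hasDerivAt_id u).const_mul _)).sub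
      (((hasDerivAt_pow 2 u).const_mul _).div_const _)).congr_deriv (by simp; ring)
  have hR₀ (u : ℝ) : HasDerivAt
      (fun v ↦ h (x + v) - (h x + h₁ x * v + h₂ x * v ^ 2 / 2 + h₃ x * v ^ 3 / 6))
      (h₁ (x + u) - h₁ x - h₂ x * u - h₃ x * u ^ 2 / 2) u :=
    ((shift hd1 u).sub (((((hasDerivAt_id u).const_mul _).const_add _).add
      (((hasDerivAt_pow 2 u).const_mul _).div_const _)).add
      (((hasDerivAt_pow 3 u).const_mul _).div_const _))).congr_deriv (by simp; ring)
  have b₂ (u : ℝ) : |h₂ (x + u) - h₂ x - h₃ x * u| ≤ L / 2 * |u| ^ 2 :=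
    (abs_le_of_hasDerivAt_of_abs_le_mul_pow (k := 1) hR₂ (by simp)
      (fun v ↦ by simpa using hlip (x + v)) u).trans_eq (by ring)
  have b₁ (u : ℝ) : |h₁ (x + u) - h₁ x - h₂ x * u - h₃ x * u ^ 2 / 2| ≤ L / 6 * |u| ^ 3 :=
    (abs_le_of_hasDerivAt_of_abs_le_mul_pow hR₁ (by simp) b₂ u).trans_eq (by ring)
  exact (abs_le_of_hasDerivAt_of_abs_le_mul_pow hR₀ (by simp) b₁ t).trans_eq
    (by rw [Even.pow_abs (by decide)]; push_cast; ring)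

theorem cubic_model_left_le {a b c A L ρ : ℝ} (hL : 0 ≤ L) (hρ : 0 ≤ ρ) (hρ2 : 2 ≤ ρ ^ 2)
    (hB : b + 2 / 3 * c ≤ -A / 2 + L / 3) (hdir : 0 ≤ a + c * (ρ * (ρ + 2)) / 6) :
    a * -ρ + b * (-ρ) ^ 2 / 2 + c * (-ρ) ^ 3 / 6 + L * (-ρ) ^ 4 / 24 ≤
      -(A / 4 * ρ ^ 2) + L / 8 * ρ ^ 4 := by
  have hsplit : a * -ρ + b * (-ρ) ^ 2 / 2 + c * (-ρ) ^ 3 / 6 =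
      -ρ * (a + c * (ρ * (ρ + 2)) / 6) + (b + 2 / 3 * c) * (ρ ^ 2 / 2) := by ring
  rw [hsplit]
  nlinarith [mul_nonneg hρ hdir, mul_le_mul_of_nonneg_right hB (sq_nonneg ρ),
    mul_nonneg (mul_nonneg hL (sq_nonneg ρ)) (sub_nonneg.mpr hρ2)]

theorem cubic_model_right_sub_le {a b c A L ρ s : ℝ} (hA : 0 ≤ A) (hL : 0 ≤ L) (hρ : 4 ≤ ρ)
    (hs0 : 0 ≤ s) (hs : s ^ 2 = ρ * (ρ + 2))
    (hB : b + 2 / 3 * c ≤ -A / 2 + L / 3) (hdir : a + c * (ρ * (ρ + 2)) / 6 ≤ 0) :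
    a * s + b * s ^ 2 / 2 + c * s ^ 3 / 6 + L * s ^ 4 / 24
      - (a * 2 + b * 2 ^ 2 / 2 + c * 2 ^ 3 / 6 - L * 2 ^ 4 / 24) ≤
      -(A / 6 * ρ ^ 2) + L / 8 * ρ ^ 4 := by
  have hsplit : a * s + b * s ^ 2 / 2 + c * s ^ 3 / 6 - (a * 2 + b * 2 ^ 2 / 2 + c * 2 ^ 3 / 6) =
      (s - 2) * (a + c * s ^ 2 / 6) + (b + 2 / 3 * c) * (s ^ 2 / 2 - 2) := by ring
  have hs2 : 2 ≤ s := by nlinarith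
  have hdrift : (s - 2) * (a + c * s ^ 2 / 6) ≤ 0 :=
    mul_nonpos_of_nonneg_of_nonpos (by linarith) (hs ▸ hdir)
  have hcurv : (b + 2 / 3 * c) * (s ^ 2 / 2 - 2) ≤ (-A / 2 + L / 3) * (s ^ 2 / 2 - 2) :=
    mul_le_mul_of_nonneg_right hB (by nlinarith)
  have hApart : A / 6 * ρ ^ 2 ≤ A / 4 * (s ^ 2 - 4) := by
    rw [hs]; nlinarith [mul_nonneg hA (show (0:ℝ) ≤ ρ ^ 2 / 12 + ρ / 2 - 1 by nlinarith)]
  have hLpart : s ^ 2 / 6 + s ^ 4 / 24 ≤ ρ ^ 4 / 8 := by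
    rw [show s ^ 4 = (s ^ 2) ^ 2 by ring, hs]
    nlinarith [mul_nonneg (mul_nonneg (sq_nonneg ρ) (by linarith : (0:ℝ) ≤ ρ))
      (by linarith : (0:ℝ) ≤ ρ - 4)]
  nlinarith [mul_le_mul_of_nonneg_left hLpart hL]

/-- One-dimensional cubic-interpolation lemma for exploiting approximate negative
curvature under a Lipschitz third derivative. -/
theorem cubic_approx_negative_curvature
    (h : ℝ → ℝ) (L : ℝ) (hL : 0 < L)
    (hd1 : Differentiable ℝ h)
    (hd2 : Differentiable ℝ (deriv h))
    (hd3 : Differentiable ℝ (deriv (deriv h)))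
    (hlip : ∀ ξ₁ ξ₂ : ℝ,
      |deriv (deriv (deriv h)) ξ₁ - deriv (deriv (deriv h)) ξ₂| ≤ L * |ξ₁ - ξ₂|)
    (A : ℝ) (hA : 0 ≤ A)
    (hnc : h 1 - h (-1) - 2 * deriv h (-1) ≤ -A)
    (ρ : ℝ) (hρ : 4 ≤ ρ) :
    min (h (-1 - ρ)) (h (1 + (Real.sqrt (ρ * (ρ + 2)) - 2))) ≤
      max (h (-1) - A / 4 * ρ ^ 2) (h 1 - A / 6 * ρ ^ 2) + L / 8 * ρ ^ 4 := by
  have taylor (t : ℝ) :=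
    abs_le.mp (abs_sub_taylor_cubic_le (x := -1) hd1 hd2 hd3 (fun y ↦ hlip y (-1)) t)
  have hT2 := (taylor 2).1
  rw [show (-1 : ℝ) + 2 = 1 by norm_num] at hT2
  have hB : deriv (deriv h) (-1) + 2 / 3 * deriv (deriv (deriv h)) (-1) ≤ -A / 2 + L / 3 := by
    linarith
  rcases le_total 0 (deriv h (-1) + deriv (deriv (deriv h)) (-1) * (ρ * (ρ + 2)) / 6)
    with hdir | hdir
  · have hTleft := (taylor (-ρ)).2
    rw [← sub_eq_add_neg] at hTleft
    have hmodel := cubic_model_left_le hL.le (by linarith) (by nlinarith) hB hdir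
    calc _ ≤ h (-1 - ρ) := min_le_left _ _
      _ ≤ h (-1) - A / 4 * ρ ^ 2 + L / 8 * ρ ^ 4 := by linarith
      _ ≤ _ := by gcongr; exact le_max_left _ _
  · set s := √(ρ * (ρ + 2))
    have hTright := (taylor s).2
    have hmodel := cubic_model_right_sub_le hA hL.le hρ (Real.sqrt_nonneg _)
      (Real.sq_sqrt (by positivity)) hB hdir
    rw [show 1 + (s - 2) = -1 + s by ring]
    calc _ ≤ h (-1 + s) := min_le_right _ _
      _ ≤ h 1 - A / 6 * ρ ^ 2 + L / 8 * ρ ^ 4 := by linarith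
      _ ≤ _ := by gcongr; exact le_max_right _ _
end

section
/- Let f : ℝ^d → ℝ have L₃-Lipschitz third-order derivatives, let α > 0, and let u, v ∈ ℝ^d with u ≠ v satisfy f(u) < f(v) + ∇f(v)ᵀ(u − v) − (α/2)‖u − v‖². Let 0 < η ≤ √(2α/L₃) and suppose ‖u − v‖ ≤ η/2. Set δ = (u − v)/‖u − v‖ and η' = √(η(η + ‖u − v‖)) − ‖u − v‖. Then min{f(v − ηδ), f(u + η'δ)} ≤ max{f(v) − (α/4)η², f(u) − (α/12)η²}. -/
/-!
Restrict `f` to the line `h θ = f (v + θ • δ)`, so that `u = v + r • δ` with `r = ‖u - v‖`. The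
Lipschitz third derivative makes `h` agree with its cubic Taylor model at `0` up to `L₃ θ⁴ / 24`.
With `s = √(η (η + r))` (so `u + η' δ = v + s δ`), the weights `s - r` and `η` combine the
quadratic and cubic terms of the model at `-η` and `s` into `η² (s + η) / r²` times those at `r`,
where the non-convexity of the pair makes the model fall `α r² / 2` below its tangent line. As
`L₃ η² ≤ 2 α` and `r ≤ η / 2`, the quartic errors fit into this decrease, so the weighted mean of
`h (-η)` and `h s` is at most the weighted mean of the two targets; hence min ≤ max.
-/

open Finset
open scoped Nat InnerProductSpace

lemma abs_le_of_abs_deriv_le_pow_of_nonneg {g g' : ℝ → ℝ} {C : ℝ} {n : ℕ}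
    (hg : ∀ t, HasDerivAt g (g' t) t) (hg0 : g 0 = 0) (hg' : ∀ t, |g' t| ≤ C * |t| ^ n)
    {t : ℝ} (ht : 0 ≤ t) : |g t| ≤ C * t ^ (n + 1) / (n + 1) := by
  have hB : ∀ x, HasDerivAt (fun x : ℝ => C * x ^ (n + 1) / (n + 1)) (C * x ^ n) x := fun x =>
    (((hasDerivAt_pow (n + 1) x).const_mul C).div_const ((n : ℝ) + 1)).congr_deriv (by
      push_cast; field_simp)
  refine image_norm_le_of_norm_deriv_right_le_deriv_boundary (f := g)
    (fun x _ => (hg x).continuousAt.continuousWithinAt) (fun x _ => (hg x).hasDerivWithinAt)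
    (by simp [hg0]) hB (fun x hx => ?_) ⟨ht, le_rfl⟩
  simpa [abs_of_nonneg hx.1] using hg' x

lemma abs_le_of_abs_deriv_le_pow {g g' : ℝ → ℝ} {C : ℝ} {n : ℕ}
    (hg : ∀ t, HasDerivAt g (g' t) t) (hg0 : g 0 = 0) (hg' : ∀ t, |g' t| ≤ C * |t| ^ n)
    (t : ℝ) : |g t| ≤ C * |t| ^ (n + 1) / (n + 1) := by
  rcases le_total 0 t with ht | ht
  · rw [abs_of_nonneg ht]
    exact abs_le_of_abs_deriv_le_pow_of_nonneg hg hg0 hg' ht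
  · have hneg : ∀ t, HasDerivAt (fun t => g (-t)) (-g' (-t)) t := fun t =>
      ((hg (-t)).comp t (hasDerivAt_neg t)).congr_deriv (by ring)
    have := abs_le_of_abs_deriv_le_pow_of_nonneg hneg (by simpa using hg0)
      (fun t => by simpa using hg' (-t)) (neg_nonneg.2 ht)
    rwa [neg_neg, ← abs_of_nonpos ht] at this

lemma abs_sub_taylor_le_of_iteratedDeriv_lipschitz {n : ℕ} {f : ℝ → ℝ} {L : ℝ}
    (hf : ContDiff ℝ n f) (hlip : ∀ t, |iteratedDeriv n f t - iteratedDeriv n f 0| ≤ L * |t|)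
    (t : ℝ) :
    |f t - ∑ k ∈ range (n + 1), iteratedDeriv k f 0 * t ^ k / k !| ≤
      L * |t| ^ (n + 1) / (n + 1)! := by
  induction n generalizing f t with
  | zero => simpa using hlip t
  | succ n ih =>
    have hd : Differentiable ℝ f := hf.differentiable (by simp)
    have hf' : ContDiff ℝ n (deriv f) := (contDiff_succ_iff_deriv.1 hf).2.2
    have hderiv_taylor := ih hf' (by simpa [← iteratedDeriv_succ'] using hlip)
    have hmonomial : ∀ (k : ℕ) (t : ℝ),
        HasDerivAt (fun t : ℝ => t ^ (k + 1) / (k + 1)!) (t ^ k / k !) t := fun k t =>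
      ((hasDerivAt_pow (k + 1) t).div_const ((k + 1)! : ℝ)).congr_deriv (by
        rw [Nat.factorial_succ]; push_cast; field_simp)
    have hremainder : ∀ t, HasDerivAt
        (fun t => f t - ∑ k ∈ range (n + 1 + 1), iteratedDeriv k f 0 * t ^ k / k !)
        (deriv f t - ∑ k ∈ range (n + 1), iteratedDeriv k (deriv f) 0 * t ^ k / k !) t := by
      intro t
      simp_rw [sum_range_succ' _ (n + 1), ← iteratedDeriv_succ', mul_div_assoc]
      simp only [pow_zero, Nat.factorial_zero, Nat.cast_one, div_one]
      exact (hd t).hasDerivAt.sub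
        ((HasDerivAt.fun_sum fun k _ => (hmonomial k t).const_mul _).add_const _)
    refine (abs_le_of_abs_deriv_le_pow (n := n + 1) (C := L / (n + 1)!) hremainder
      (by simp [sum_range_succ']) (fun t => (hderiv_taylor t).trans_eq (by ring)) t).trans_eq ?_
    rw [Nat.factorial_succ (n + 1)]
    push_cast
    field_simp

lemma min_le_max_of_weighted_le {x y z w a b : ℝ} (ha : 0 ≤ a) (hb : 0 ≤ b) (hab : 0 < a + b)
    (h : a * x + b * y ≤ a * z + b * w) : min x y ≤ max z w := by
  refine le_of_mul_le_mul_left ?_ hab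
  calc (a + b) * min x y = a * min x y + b * min x y := add_mul a b _
    _ ≤ a * x + b * y := add_le_add (mul_le_mul_of_nonneg_left (min_le_left x y) ha)
        (mul_le_mul_of_nonneg_left (min_le_right x y) hb)
    _ ≤ a * z + b * w := h
    _ ≤ a * max z w + b * max z w := add_le_add (mul_le_mul_of_nonneg_left (le_max_left z w) ha)
        (mul_le_mul_of_nonneg_left (le_max_right z w) hb)
    _ = (a + b) * max z w := (add_mul a b _).symm

-- What is left once `min_le_max_of_cubic_model` has eliminated the quadratic and cubic terms:
-- the curvature gain absorbs the quartic Taylor errors.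
lemma weighted_remainder_le {L α r η s : ℝ} (hα : 0 < α) (hr : 0 < r) (hrη : r ≤ η / 2)
    (hLη : L * η ^ 2 ≤ 2 * α) (hs2 : s ^ 2 = η * (η + r)) (hsη : η ≤ s) :
    (η ^ 2 * (s + η) - η * r ^ 2) * (-(α / 2) + L * r ^ 2 / 24)
      + L / 24 * ((s - r) * η ^ 4 + η * s ^ 4 + η * r ^ 4)
      ≤ -(α / 4 * (s - r) * η ^ 2) - α / 12 * η ^ 3 := by
  have hη : 0 < η := by linarith
  have hr2 : r ^ 2 ≤ η ^ 2 / 4 := by nlinarith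
  have hs4 : s ^ 4 = η ^ 2 * (η + r) ^ 2 := by rw [show s ^ 4 = (s ^ 2) ^ 2 by ring, hs2]; ring
  have hX : 0 ≤ (s + η) * r ^ 2 + (s - r) * η ^ 2 + η * (η + r) ^ 2 := by nlinarith
  have hαs : 0 ≤ α * s := mul_nonneg hα.le (by linarith)
  have hαη : 0 ≤ α * η := by positivity
  rw [hs4]
  linarith [mul_le_mul_of_nonneg_right hLη hX, mul_le_mul_of_nonneg_left hr2 hαs,
    mul_le_mul_of_nonneg_left hr2 hαη, mul_nonneg hαs (sq_nonneg η),
    mul_nonneg hαη (sq_nonneg η), mul_nonneg hαη (mul_nonneg hr.le hη.le)]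

lemma min_le_max_of_cubic_model {h : ℝ → ℝ} {a b c L α r η : ℝ}
    (hT : ∀ t, |h t - (h 0 + a * t + b * t ^ 2 / 2 + c * t ^ 3 / 6)| ≤ L * t ^ 4 / 24)
    (hα : 0 < α) (hr : 0 < r) (hrη : r ≤ η / 2) (hLη : L * η ^ 2 ≤ 2 * α)
    (hpair : h r < h 0 + a * r - α / 2 * r ^ 2) :
    min (h (-η)) (h √(η * (η + r))) ≤ max (h 0 - α / 4 * η ^ 2) (h r - α / 12 * η ^ 2) := by
  set s := √(η * (η + r))
  have hη : 0 < η := by linarith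
  have hs2 : s ^ 2 = η * (η + r) := Real.sq_sqrt (by positivity)
  have hsη : η ≤ s := Real.le_sqrt_of_sq_le (by nlinarith)
  have hTη := (abs_le.1 (hT (-η))).2
  have hTs := (abs_le.1 (hT s)).2
  have hTr := (abs_le.1 (hT r)).1
  refine min_le_max_of_weighted_le (a := s - r) (b := η) (by linarith) hη.le (by linarith) ?_
  have hmodel : (s - r) * (b * η ^ 2 / 2 - c * η ^ 3 / 6) + η * (b * s ^ 2 / 2 + c * s ^ 3 / 6)
      = η ^ 2 * (s + η) * (b / 2 + c * r / 6) := by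
    linear_combination (b * η / 2 + c * η * s / 6) * hs2
  have hcurv : b / 2 + c * r / 6 ≤ -(α / 2) + L * r ^ 2 / 24 := by
    have : r ^ 2 * (b / 2 + c * r / 6) < r ^ 2 * (-(α / 2) + L * r ^ 2 / 24) := by linarith
    exact (lt_of_mul_lt_mul_left this (sq_nonneg r)).le
  have hcoef : 0 ≤ η ^ 2 * (s + η) - η * r ^ 2 := by nlinarith
  linarith [mul_le_mul_of_nonneg_left hTη (by linarith : 0 ≤ s - r),
    mul_le_mul_of_nonneg_left hTs hη.le, mul_le_mul_of_nonneg_left hTr hη.le,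
    mul_le_mul_of_nonneg_left hcurv hcoef, weighted_remainder_le hα hr hrη hLη hs2 hsη]

lemma DifferentiableAt.hasDerivAt_comp_add_smul {F : Type*} [NormedAddCommGroup F]
    [InnerProductSpace ℝ F] [CompleteSpace F] {f : F → ℝ} {x : F}
    (hf : DifferentiableAt ℝ f x) (δ : F) :
    HasDerivAt (fun θ : ℝ => f (x + θ • δ)) ⟪gradient f x, δ⟫_ℝ 0 := by
  have hline : HasDerivAt (fun θ : ℝ => x + θ • δ) δ 0 := by
    simpa using ((hasDerivAt_id (0 : ℝ)).smul_const δ).const_add x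
  rw [inner_gradient_left]
  exact (by simpa using hf.hasFDerivAt : HasFDerivAt f (fderiv ℝ f x) (x + (0 : ℝ) • δ))
    |>.comp_hasDerivAt 0 hline

/-- Exploiting a non-convexity witness pair under third-order smoothness:
asymmetric steps from u and v decrease the function value. -/
theorem exploit_nc_pair_third_order
    {d : ℕ} (f : EuclideanSpace ℝ (Fin d) → ℝ)
    (L₃ : ℝ) (hL₃ : 0 < L₃)
    (hdiff : ContDiff ℝ 3 f)
    (hlip : ∀ (x₀ δ : EuclideanSpace ℝ (Fin d)), ‖δ‖ = 1 → ∀ θ₁ θ₂ : ℝ,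
      |iteratedDeriv 3 (fun θ : ℝ => f (x₀ + θ • δ)) θ₁ -
        iteratedDeriv 3 (fun θ : ℝ => f (x₀ + θ • δ)) θ₂| ≤ L₃ * |θ₁ - θ₂|)
    (α : ℝ) (hα : 0 < α)
    (u v : EuclideanSpace ℝ (Fin d)) (huv : u ≠ v)
    (hpair : f u < f v + ⟪gradient f v, u - v⟫_ℝ - α / 2 * ‖u - v‖ ^ 2)
    (η : ℝ) (hη0 : 0 < η) (hη : η ≤ Real.sqrt (2 * α / L₃))
    (hdist : ‖u - v‖ ≤ η / 2) :
    min (f (v - η • (‖u - v‖⁻¹ • (u - v))))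
        (f (u + (Real.sqrt (η * (η + ‖u - v‖)) - ‖u - v‖) • (‖u - v‖⁻¹ • (u - v))))
      ≤ max (f v - α / 4 * η ^ 2) (f u - α / 12 * η ^ 2) := by
  have hne : u - v ≠ 0 := sub_ne_zero.2 huv
  set r := ‖u - v‖
  set δ := r⁻¹ • (u - v) with hδ_def
  have hr : 0 < r := norm_pos_iff.2 hne
  have hu : u = v + r • δ := by rw [hδ_def, smul_smul, mul_inv_cancel₀ hr.ne', one_smul]; abel
  set h := fun θ : ℝ => f (v + θ • δ)
  have hh : ContDiff ℝ 3 h := hdiff.comp (contDiff_const.add (contDiff_id.smul contDiff_const))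
  have hT : ∀ t, |h t - (h 0 + deriv h 0 * t + iteratedDeriv 2 h 0 * t ^ 2 / 2
      + iteratedDeriv 3 h 0 * t ^ 3 / 6)| ≤ L₃ * t ^ 4 / 24 := fun t => by
    simpa [sum_range_succ, Nat.factorial, add_assoc, (by decide : Even 4).pow_abs] using
      abs_sub_taylor_le_of_iteratedDeriv_lipschitz hh
        (fun t => by simpa using hlip v δ (norm_smul_inv_norm hne) t 0) t
  have hLη : L₃ * η ^ 2 ≤ 2 * α :=
    (le_div_iff₀' hL₃).1 ((Real.le_sqrt hη0.le (by positivity)).1 hη)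
  have hgrad : ⟪gradient f v, u - v⟫_ℝ = deriv h 0 * r := by
    rw [((hdiff.differentiable (by simp) v).hasDerivAt_comp_add_smul δ).deriv, hu]
    simp [mul_comm]
  convert min_le_max_of_cubic_model hT hα hr hdist hLη (by simpa [h, ← hu, hgrad] using hpair)
    using 3
  · module
  · rw [hu]; module
  · simp [h]
  · simp [h, hu]
end

section
/- Let h : ℝ → ℝ be three times differentiable with L-Lipschitz continuous third derivative for some L > 0. If h(0) ≤ A, h(−1/2) ≥ −B, h(−1) ≤ C, and h(−3) ≥ −D for some A, B, C, D ≥ 0, then for every θ ∈ [0, 1], h(θ) ≤ h(0) + 7A + 12.8B + 6C + 0.2D + L. -/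
/-!
Integrating the Lipschitz bound on `h'''` three times shows that the cubic Taylor polynomial `p`
of `h` at `0` satisfies `|h ξ - p ξ| ≤ L ξ⁴ / 24`. A cubic is the Lagrange interpolant of its
values at `0, -1/2, -1, -3`, and for `θ ∈ [0, 1]` the four Lagrange weights lie in `[1, 8]`,
`[-64/5, 0]`, `[0, 6]` and `[-1/5, 0]`. Their signs match the directions of the one-sided bounds
at the nodes, so these bounds transfer to `p θ`; the Taylor errors at `θ` and at the nodes then
add up to exactly `L` (`1/24 + 1/30 + 1/4 + 27/40 = 1`).
-/

open Finset Nat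

lemma abs_le_of_abs_deriv_le_pow_s16 {f f' : ℝ → ℝ} {c : ℝ} {n : ℕ}
    (hf : ∀ x, HasDerivAt f (f' x) x) (hf0 : f 0 = 0) (hf' : ∀ x, |f' x| ≤ c * |x| ^ n)
    (ξ : ℝ) : |f ξ| ≤ c / (n + 1) * |ξ| ^ (n + 1) := by
  wlog hξ : 0 ≤ ξ generalizing f f' ξ
  · have hneg : ∀ x, HasDerivAt (fun x => f (-x)) (-f' (-x)) x := fun x => by
      simpa [Function.comp_def] using (hf (-x)).comp x (hasDerivAt_neg x)
    simpa using this hneg (by simpa using hf0) (fun x => by simpa using hf' (-x)) (-ξ)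
      (by linarith)
  have hB : ∀ x : ℝ, HasDerivAt (fun x => c / (n + 1) * x ^ (n + 1)) (c * x ^ n) x := fun x => by
    refine ((hasDerivAt_pow (n + 1) x).const_mul _).congr_deriv ?_
    field_simp
    push_cast
    ring
  rw [abs_of_nonneg hξ]
  refine image_norm_le_of_norm_deriv_right_le_deriv_boundary
    (fun x _ => (hf x).continuousAt.continuousWithinAt) (fun x _ => (hf x).hasDerivWithinAt)
    (by simp [hf0]) hB (fun x hx => ?_) ⟨hξ, le_rfl⟩
  simpa [abs_of_nonneg hx.1] using hf' x

lemma hasDerivAt_sum_mul_pow_div_factorial (a : ℕ → ℝ) (n : ℕ) (x : ℝ) :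
    HasDerivAt (fun x => ∑ k ∈ range (n + 1), a k * x ^ k / k !)
      (∑ k ∈ range n, a (k + 1) * x ^ k / k !) x := by
  have hterm : ∀ k ∈ range n, HasDerivAt (fun x => a (k + 1) * x ^ (k + 1) / (k + 1)!)
      (a (k + 1) * x ^ k / k !) x := fun k _ => by
    refine (((hasDerivAt_pow (k + 1) x).const_mul (a (k + 1))).div_const _).congr_deriv ?_
    push_cast [Nat.factorial_succ]
    field_simp
  simp only [sum_range_succ' _ n, pow_zero, mul_one, factorial_zero, cast_one, div_one]
  exact (HasDerivAt.fun_sum hterm).add_const _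

theorem abs_sub_taylor_le_of_lipschitz (n : ℕ) {f : ℝ → ℝ} {L : ℝ}
    (hdiff : ∀ k < n, Differentiable ℝ (iteratedDeriv k f))
    (hlip : ∀ x y, |iteratedDeriv n f x - iteratedDeriv n f y| ≤ L * |x - y|) (ξ : ℝ) :
    |f ξ - ∑ k ∈ range (n + 1), iteratedDeriv k f 0 * ξ ^ k / k !| ≤
      L / (n + 1)! * |ξ| ^ (n + 1) := by
  induction n generalizing f ξ with
  | zero => simpa using hlip ξ 0
  | succ n ih =>
    have hderiv := ih (f := deriv f)
      (fun k hk => by simpa only [← iteratedDeriv_succ'] using hdiff (k + 1) (by omega))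
      (by simpa only [← iteratedDeriv_succ'] using hlip)
    have hremainder : ∀ x, HasDerivAt
        (fun x => f x - ∑ k ∈ range (n + 2), iteratedDeriv k f 0 * x ^ k / k !)
        (deriv f x - ∑ k ∈ range (n + 1), iteratedDeriv k (deriv f) 0 * x ^ k / k !) x := by
      intro x
      simp only [← iteratedDeriv_succ']
      exact ((by simpa using hdiff 0 (by omega) : Differentiable ℝ f) x).hasDerivAt.sub
        (hasDerivAt_sum_mul_pow_div_factorial _ _ x)
    have hzero : f 0 - ∑ k ∈ range (n + 2), iteratedDeriv k f 0 * (0 : ℝ) ^ k / k ! = 0 := by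
      simp [sum_range_succ']
    convert abs_le_of_abs_deriv_le_pow_s16 hremainder hzero hderiv ξ using 1
    push_cast [factorial_succ]
    field_simp

theorem cubic_le_of_node_bounds {p : ℝ → ℝ} {a₀ a₁ a₂ a₃ : ℝ}
    (hp : ∀ x, p x = a₀ + a₁ * x + a₂ * x ^ 2 + a₃ * x ^ 3) {A B C D : ℝ}
    (hA : 0 ≤ A) (hB : 0 ≤ B) (hC : 0 ≤ C) (hD : 0 ≤ D)
    (h0 : p 0 ≤ A) (hhalf : -B ≤ p (-1 / 2)) (hone : p (-1) ≤ C) (hthree : -D ≤ p (-3))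
    {θ : ℝ} (hθ : θ ∈ Set.Icc 0 1) :
    p θ ≤ p 0 + 7 * A + 64 / 5 * B + 6 * C + 1 / 5 * D := by
  obtain ⟨hθ0, hθ1⟩ := hθ
  have hlagrange : p θ = p 0 + ((θ + 1 / 2) * (θ + 1) * (θ + 3) * (2 / 3) - 1) * p 0
      + (8 / 5 * (θ * (θ + 1) * (θ + 3))) * -p (-1 / 2)
      + θ * (θ + 1 / 2) * (θ + 3) * p (-1)
      + (1 / 15 * (θ * (θ + 1 / 2) * (θ + 1))) * -p (-3) := by
    simp only [hp]
    ring
  have hl₀ : (0 + 1 / 2) * (0 + 1) * (0 + 3) ≤ (θ + 1 / 2) * (θ + 1) * (θ + 3) := by gcongr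
  have hu₀ : (θ + 1 / 2) * (θ + 1) * (θ + 3) ≤ (1 + 1 / 2) * (1 + 1) * (1 + 3) := by gcongr
  have hu₁ : θ * (θ + 1) * (θ + 3) ≤ 1 * (1 + 1) * (1 + 3) := by gcongr
  have hu₂ : θ * (θ + 1 / 2) * (θ + 3) ≤ 1 * (1 + 1 / 2) * (1 + 3) := by gcongr
  have hu₃ : θ * (θ + 1 / 2) * (θ + 1) ≤ 1 * (1 + 1 / 2) * (1 + 1) := by gcongr
  have hterm₀ : ((θ + 1 / 2) * (θ + 1) * (θ + 3) * (2 / 3) - 1) * p 0 ≤ 7 * A :=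
    mul_le_mul_of_nonneg (by linarith) h0 (by linarith) hA
  have hterm₁ : (8 / 5 * (θ * (θ + 1) * (θ + 3))) * -p (-1 / 2) ≤ 64 / 5 * B :=
    mul_le_mul_of_nonneg (by linarith) (neg_le.mp hhalf) (by positivity) hB
  have hterm₂ : θ * (θ + 1 / 2) * (θ + 3) * p (-1) ≤ 6 * C :=
    mul_le_mul_of_nonneg (by linarith) hone (by positivity) hC
  have hterm₃ : (1 / 15 * (θ * (θ + 1 / 2) * (θ + 1))) * -p (-3) ≤ 1 / 5 * D :=
    mul_le_mul_of_nonneg (by linarith) (neg_le.mp hthree) (by positivity) hD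
  linarith

theorem abs_sub_cubic_taylor_le {h : ℝ → ℝ} {L : ℝ} (hd1 : Differentiable ℝ h)
    (hd2 : Differentiable ℝ (deriv h)) (hd3 : Differentiable ℝ (deriv (deriv h)))
    (hlip : ∀ x y, |deriv (deriv (deriv h)) x - deriv (deriv (deriv h)) y| ≤ L * |x - y|)
    (ξ : ℝ) :
    |h ξ - (h 0 + deriv h 0 * ξ + deriv (deriv h) 0 / 2 * ξ ^ 2
      + deriv (deriv (deriv h)) 0 / 6 * ξ ^ 3)| ≤ L / 24 * ξ ^ 4 := by
  have hdiff : ∀ k < 3, Differentiable ℝ (iteratedDeriv k h) := by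
    intro k hk
    interval_cases k <;> simpa [iteratedDeriv_succ]
  have := abs_sub_taylor_le_of_lipschitz 3 hdiff (by simpa [iteratedDeriv_succ] using hlip) ξ
  convert this using 2
  · simp [sum_range_succ, iteratedDeriv_succ, factorial, mul_div_assoc', mul_comm]
  · norm_num [factorial]
  · exact (Even.pow_abs ⟨2, rfl⟩ ξ).symm

theorem cubic_interpolation_value_bound_general
    (h : ℝ → ℝ) (L : ℝ)
    (hd1 : Differentiable ℝ h)
    (hd2 : Differentiable ℝ (deriv h))
    (hd3 : Differentiable ℝ (deriv (deriv h)))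
    (hlip : ∀ ξ₁ ξ₂ : ℝ,
      |deriv (deriv (deriv h)) ξ₁ - deriv (deriv (deriv h)) ξ₂| ≤ L * |ξ₁ - ξ₂|)
    (A B C D : ℝ) (hA : 0 ≤ A) (hB : 0 ≤ B) (hC : 0 ≤ C) (hD : 0 ≤ D)
    (h0 : h 0 ≤ A) (hhalf : h (-1 / 2) ≥ -B) (hone : h (-1) ≤ C)
    (hthree : h (-3) ≥ -D) :
    ∀ θ ∈ Set.Icc (0 : ℝ) 1,
      h θ ≤ h 0 + 7 * A + 12.8 * B + 6 * C + 0.2 * D + L := by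
  intro θ hθ
  have hL : 0 ≤ L := by simpa using (abs_nonneg _).trans (hlip 1 0)
  set p : ℝ → ℝ := fun x => h 0 + deriv h 0 * x + deriv (deriv h) 0 / 2 * x ^ 2
    + deriv (deriv (deriv h)) 0 / 6 * x ^ 3
  have htaylor (ξ : ℝ) : |h ξ - p ξ| ≤ L / 24 * ξ ^ 4 :=
    abs_sub_cubic_taylor_le hd1 hd2 hd3 hlip ξ
  have hnodes := cubic_le_of_node_bounds (p := p) (fun x => rfl) hA
    (by positivity : 0 ≤ B + L / 384) (by positivity : 0 ≤ C + L / 24)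
    (by positivity : 0 ≤ D + 27 / 8 * L) (by simpa [p] using h0)
    (by linarith [abs_le.mp (htaylor (-1 / 2))]) (by linarith [abs_le.mp (htaylor (-1))])
    (by linarith [abs_le.mp (htaylor (-3))]) hθ
  have hθ4 : L / 24 * θ ^ 4 ≤ L / 24 :=
    mul_le_of_le_one_right (by positivity) (pow_le_one₀ hθ.1 hθ.2)
  have hp0 : p 0 = h 0 := by simp [p]
  linarith [abs_le.mp (htaylor θ)]

/-- One-dimensional cubic-interpolation bound: four sampled values of h control h on
[0, 1] up to the Lipschitz constant of the third derivative. -/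
theorem cubic_interpolation_value_bound
    (h : ℝ → ℝ) (L : ℝ) (hL : 0 < L)
    (hd1 : Differentiable ℝ h)
    (hd2 : Differentiable ℝ (deriv h))
    (hd3 : Differentiable ℝ (deriv (deriv h)))
    (hlip : ∀ ξ₁ ξ₂ : ℝ,
      |deriv (deriv (deriv h)) ξ₁ - deriv (deriv (deriv h)) ξ₂| ≤ L * |ξ₁ - ξ₂|)
    (A B C D : ℝ) (hA : 0 ≤ A) (hB : 0 ≤ B) (hC : 0 ≤ C) (hD : 0 ≤ D)
    (h0 : h 0 ≤ A) (hhalf : h (-1 / 2) ≥ -B) (hone : h (-1) ≤ C)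
    (hthree : h (-3) ≥ -D) :
    ∀ θ ∈ Set.Icc (0 : ℝ) 1,
      h θ ≤ h 0 + 7 * A + 12.8 * B + 6 * C + 0.2 * D + L :=
  cubic_interpolation_value_bound_general h L hd1 hd2 hd3 hlip A B C D hA hB hC hD h0 hhalf hone
    hthree
end

section
/- Let f : ℝ^d → ℝ have L₃-Lipschitz third-order derivatives, let α > 0 and τ > 0 with τ ≤ √(α/(16L₃)), let ω ∈ (0, 1), and let y₀, y_{j−1}, y_j ∈ ℝ^d satisfy: f(y_{j−1}) ≤ f(y₀), f(y_j) ≤ f(y₀), f((y_j + y_{j−1})/2) ≥ f(y₀) − ατ², f(3y_{j−1} − 2y_j) ≥ f(y₀) − ατ², and ‖y_j − y_{j−1}‖ ≤ 2τ. Then the extrapolated point x = y_j + ω(y_j − y_{j−1}) satisfies f(x) ≤ f(y₀) + 14ατ². -/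
/-!
Along the line `θ ↦ y_j + θ • (y_j - y_{j-1})` the function has third derivative Lipschitz
with constant `L₃ ‖y_j - y_{j-1}‖⁴ ≤ α τ²`, so it lies within `α τ² θ⁴ / 24` of its cubic
Taylor polynomial `P`. Lagrange interpolation at the nodes `0, -1/2, -1, -3` writes `P ω` as a
combination of the four node values whose weights are nonnegative at `0, -1` and nonpositive at
`-1/2, -3`, exactly matching the signs of the hypotheses: upper bounds at `y_j, y_{j-1}` and lower
bounds at the other two points. The resulting error budget is largest at `ω = 1`, where it
equals `14 α τ²`.
-/

open Finset
open scoped Nat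

theorem abs_le_of_abs_deriv_le_mul_pow_of_nonneg {u u' : ℝ → ℝ} {C : ℝ} {n : ℕ}
    (hu : ∀ t, HasDerivAt u (u' t) t) (h0 : u 0 = 0) (hu' : ∀ t, |u' t| ≤ C * |t| ^ n)
    {a : ℝ} (ha : 0 ≤ a) : |u a| ≤ C * a ^ (n + 1) / (n + 1) := by
  have hB (t : ℝ) : HasDerivAt (fun t => C * t ^ (n + 1) / (n + 1)) (C * t ^ n) t := by
    refine (((hasDerivAt_pow (n + 1) t).const_mul C).div_const _).congr_deriv ?_
    push_cast
    field_simp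
  refine image_norm_le_of_norm_deriv_right_le_deriv_boundary
    (fun t _ => (hu t).continuousAt.continuousWithinAt) (fun t _ => (hu t).hasDerivWithinAt)
    (by simp [h0]) hB (fun t ht => ?_) ⟨ha, le_rfl⟩
  simpa [abs_of_nonneg ht.1] using hu' t

theorem abs_le_of_abs_deriv_le_mul_pow {u u' : ℝ → ℝ} {C : ℝ} {n : ℕ}
    (hu : ∀ t, HasDerivAt u (u' t) t) (h0 : u 0 = 0) (hu' : ∀ t, |u' t| ≤ C * |t| ^ n)
    (a : ℝ) : |u a| ≤ C * |a| ^ (n + 1) / (n + 1) := by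
  rcases le_total 0 a with ha | ha
  · simpa [abs_of_nonneg ha] using abs_le_of_abs_deriv_le_mul_pow_of_nonneg hu h0 hu' ha
  · have hneg (t : ℝ) : HasDerivAt (fun t => u (-t)) (-u' (-t)) t := by
      simpa [Function.comp_def] using (hu (-t)).comp t (hasDerivAt_neg t)
    simpa [abs_of_nonpos ha] using abs_le_of_abs_deriv_le_mul_pow_of_nonneg hneg
      (by simpa using h0) (fun t => by simpa using hu' (-t)) (neg_nonneg.2 ha)

theorem hasDerivAt_sum_div_factorial_mul_pow (c : ℕ → ℝ) (n : ℕ) (t : ℝ) :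
    HasDerivAt (fun t => ∑ k ∈ range (n + 1), c k / k ! * t ^ k)
      (∑ k ∈ range n, c (k + 1) / k ! * t ^ k) t := by
  induction n with
  | zero => simpa using hasDerivAt_const t (c 0)
  | succ n ih =>
    have hsplit : (fun t => ∑ k ∈ range (n + 2), c k / k ! * t ^ k) = fun t =>
        ∑ k ∈ range (n + 1), c k / k ! * t ^ k + c (n + 1) / (n + 1)! * t ^ (n + 1) := by
      funext t
      rw [sum_range_succ]
    rw [hsplit, sum_range_succ]
    refine ih.add (((hasDerivAt_pow (n + 1) t).const_mul _).congr_deriv ?_)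
    push_cast [Nat.factorial_succ]
    field_simp

theorem abs_sub_taylor_le {n : ℕ} {g : ℝ → ℝ} {L : ℝ} (hg : ContDiff ℝ n g)
    (hlip : ∀ t, |iteratedDeriv n g t - iteratedDeriv n g 0| ≤ L * |t|) (a : ℝ) :
    |g a - ∑ k ∈ range (n + 1), iteratedDeriv k g 0 / k ! * a ^ k| ≤
      L * |a| ^ (n + 1) / (n + 1)! := by
  induction n generalizing g a with
  | zero => simpa using hlip a
  | succ n ih =>
    have hg' : ContDiff ℝ n (deriv g) := (contDiff_succ_iff_deriv.1 (by exact_mod_cast hg)).2.2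
    have hu (t : ℝ) :
        HasDerivAt (fun t => g t - ∑ k ∈ range (n + 2), iteratedDeriv k g 0 / k ! * t ^ k)
          (deriv g t - ∑ k ∈ range (n + 1), iteratedDeriv k (deriv g) 0 / k ! * t ^ k) t := by
      refine (((hg.differentiable (by simp)) t).hasDerivAt.sub
        (hasDerivAt_sum_div_factorial_mul_pow _ (n + 1) t)).congr_deriv ?_
      simp only [iteratedDeriv_succ']
    have h0 : g 0 - ∑ k ∈ range (n + 2), iteratedDeriv k g 0 / k ! * 0 ^ k = 0 := by
      simp [sum_range_succ']
    have hderiv (t : ℝ) := ih hg' (by simpa [iteratedDeriv_succ'] using hlip) t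
    have hrem := abs_le_of_abs_deriv_le_mul_pow hu h0 (C := L / (n + 1)!)
      (fun t => by simpa [mul_div_right_comm] using hderiv t) a
    convert hrem using 1
    push_cast [Nat.factorial_succ]
    field_simp

theorem abs_iteratedDeriv_line_sub_le {E : Type*} [NormedAddCommGroup E] [NormedSpace ℝ E]
    {f : E → ℝ} {n : ℕ} {L : ℝ} (hf : ContDiff ℝ n f)
    (hlip : ∀ x δ : E, ‖δ‖ = 1 → ∀ θ₁ θ₂ : ℝ,
      |iteratedDeriv n (fun θ : ℝ => f (x + θ • δ)) θ₁ -
        iteratedDeriv n (fun θ : ℝ => f (x + θ • δ)) θ₂| ≤ L * |θ₁ - θ₂|)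
    (x v : E) (s₁ s₂ : ℝ) :
    |iteratedDeriv n (fun θ : ℝ => f (x + θ • v)) s₁ -
      iteratedDeriv n (fun θ : ℝ => f (x + θ • v)) s₂| ≤
        L * ‖v‖ ^ (n + 1) * |s₁ - s₂| := by
  rcases eq_or_ne v 0 with rfl | hv
  · simp [iteratedDeriv_const]
  set r := ‖v‖
  have hr : 0 < r := norm_pos_iff.2 hv
  set δ : E := r⁻¹ • v
  have hline : (fun θ : ℝ => f (x + θ • v)) = fun θ => f (x + (r * θ) • δ) := by
    funext θ
    rw [smul_smul, mul_right_comm, mul_inv_cancel₀ hr.ne', one_mul]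
  have hg : ContDiff ℝ n (fun t : ℝ => f (x + t • δ)) :=
    hf.comp (contDiff_const.add (contDiff_id.smul contDiff_const))
  rw [hline, iteratedDeriv_comp_const_mul hg, ← mul_sub, abs_mul, abs_pow, abs_of_pos hr]
  calc r ^ n * |_ - _| ≤ r ^ n * (L * |r * s₁ - r * s₂|) :=
        mul_le_mul_of_nonneg_left (hlip x δ (norm_smul_inv_norm hv) _ _) (by positivity)
    _ = L * r ^ (n + 1) * |s₁ - s₂| := by
        rw [← mul_sub, abs_mul, abs_of_pos hr]
        ring

theorem extrapolation_le_of_abs_sub_cubic_le {g : ℝ → ℝ} {c : ℕ → ℝ} {K ω F A : ℝ}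
    (hg : ∀ s, |g s - ∑ k ∈ range 4, c k * s ^ k| ≤ K * s ^ 4 / 24)
    (hKA : K ≤ A) (hω₀ : 0 ≤ ω) (hω₁ : ω ≤ 1) (h₀ : g 0 ≤ F) (h₁ : g (-1) ≤ F)
    (h₂ : F - A ≤ g (-1 / 2)) (h₃ : F - A ≤ g (-3)) :
    g ω ≤ F + 14 * A := by
  set P : ℝ → ℝ := fun s => ∑ k ∈ range 4, c k * s ^ k with hP
  have hgP (s : ℝ) : |g s - P s| ≤ s ^ 4 * A / 24 := by
    have := mul_le_mul_of_nonneg_left hKA (by positivity : 0 ≤ s ^ 4)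
    linarith [hg s]
  have hA : 0 ≤ A := by linarith [(abs_nonneg _).trans (hgP 1)]
  have hw : g ω ≤ P ω + A / 24 := by
    have := mul_le_of_le_one_left hA (pow_le_one₀ hω₀ hω₁ : ω ^ 4 ≤ 1)
    linarith [(abs_le.1 (hgP ω)).2]
  have p₀ : P 0 ≤ F := by linarith [(abs_le.1 (hgP 0)).1]
  have p₁ : P (-1) ≤ F + A / 24 := by linarith [(abs_le.1 (hgP (-1))).1]
  have p₂ : F - 385 / 384 * A ≤ P (-1 / 2) := by linarith [(abs_le.1 (hgP (-1 / 2))).2]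
  have p₃ : F - 105 / 24 * A ≤ P (-3) := by linarith [(abs_le.1 (hgP (-3))).2]
  have hlagrange : P ω = (ω + 1 / 2) * (ω + 1) * (ω + 3) * (2 / 3) * P 0
      - 8 / 5 * ω * (ω + 1) * (ω + 3) * P (-1 / 2) + ω * (ω + 1 / 2) * (ω + 3) * P (-1)
      - ω * (ω + 1 / 2) * (ω + 1) / 15 * P (-3) := by
    simp only [hP, sum_range_succ, sum_range_zero]
    ring
  have b₀ := mul_le_mul_of_nonneg_left p₀
    (by bound : 0 ≤ (ω + 1 / 2) * (ω + 1) * (ω + 3) * (2 / 3))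
  have b₁ := mul_le_mul_of_nonneg_left p₂ (by bound : 0 ≤ 8 / 5 * ω * (ω + 1) * (ω + 3))
  have b₂ := mul_le_mul_of_nonneg_left p₁ (by bound : 0 ≤ ω * (ω + 1 / 2) * (ω + 3))
  have b₃ := mul_le_mul_of_nonneg_left p₃ (by bound : 0 ≤ ω * (ω + 1 / 2) * (ω + 1) / 15)
  -- `14` minus the weighted error budget; it vanishes at `ω = 1`.
  have hslack : 0 ≤ (1 - ω) * (335 / 24 + 143 / 16 * ω + 31 / 16 * ω ^ 2) * A := by
    have : 0 ≤ 1 - ω := by linarith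
    positivity
  linear_combination hw + hlagrange + b₀ + b₁ + b₂ + b₃ + hslack

theorem extrapolated_point_value_bound_general
    {d : ℕ} (f : EuclideanSpace ℝ (Fin d) → ℝ)
    (L₃ : ℝ) (hL₃ : 0 < L₃)
    (hdiff : ContDiff ℝ 3 f)
    (hlip : ∀ (x₀ δ : EuclideanSpace ℝ (Fin d)), ‖δ‖ = 1 → ∀ θ₁ θ₂ : ℝ,
      |iteratedDeriv 3 (fun θ : ℝ => f (x₀ + θ • δ)) θ₁ -
        iteratedDeriv 3 (fun θ : ℝ => f (x₀ + θ • δ)) θ₂| ≤ L₃ * |θ₁ - θ₂|)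
    (α τ : ℝ) (hτ : 0 < τ)
    (hτle : τ ≤ Real.sqrt (α / (16 * L₃)))
    (ω : ℝ) (hω : ω ∈ Set.Ioo (0 : ℝ) 1)
    (y₀ yjm yj : EuclideanSpace ℝ (Fin d))
    (h1 : f yjm ≤ f y₀) (h2 : f yj ≤ f y₀)
    (h3 : f ((1 / 2 : ℝ) • (yj + yjm)) ≥ f y₀ - α * τ ^ 2)
    (h4 : f ((3 : ℝ) • yjm - (2 : ℝ) • yj) ≥ f y₀ - α * τ ^ 2)
    (h5 : ‖yj - yjm‖ ≤ 2 * τ) :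
    f (yj + ω • (yj - yjm)) ≤ f y₀ + 14 * α * τ ^ 2 := by
  set v := yj - yjm
  set g : ℝ → ℝ := fun θ => f (yj + θ • v)
  have hg : ContDiff ℝ 3 g := hdiff.comp (contDiff_const.add (contDiff_id.smul contDiff_const))
  have htaylor (s : ℝ) : |g s - ∑ k ∈ range 4, iteratedDeriv k g 0 / k ! * s ^ k| ≤
      L₃ * ‖v‖ ^ 4 * s ^ 4 / 24 := by
    calc _ ≤ L₃ * ‖v‖ ^ (3 + 1) * |s| ^ (3 + 1) / (3 + 1)! := abs_sub_taylor_le hg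
          (fun t => by simpa using abs_iteratedDeriv_line_sub_le hdiff hlip yj v t 0) s
      _ = _ := by rw [Even.pow_abs ⟨2, rfl⟩]; norm_num [Nat.factorial]
  have hKA : L₃ * ‖v‖ ^ 4 ≤ α * τ ^ 2 := by
    have hτ2 : 16 * L₃ * τ ^ 2 ≤ α := by
      rw [← le_div_iff₀' (by positivity)]
      exact (Real.le_sqrt' hτ).1 hτle
    calc L₃ * ‖v‖ ^ 4 ≤ L₃ * (2 * τ) ^ 4 := by gcongr
      _ = 16 * L₃ * τ ^ 2 * τ ^ 2 := by ring
      _ ≤ α * τ ^ 2 := by gcongr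
  calc f (yj + ω • v) ≤ f y₀ + 14 * (α * τ ^ 2) :=
        extrapolation_le_of_abs_sub_cubic_le htaylor hKA hω.1.le hω.2.le
          (by simpa [g] using h2) (by simpa [g, v] using h1)
          (by convert h3 using 2; module) (by convert h4 using 2; module)
    _ = f y₀ + 14 * α * τ ^ 2 := by ring

/-- Bounding the function value at the extrapolated point x = y_j + ω(y_j − y_{j−1})
via cubic interpolation under third-order smoothness. -/
theorem extrapolated_point_value_bound
    {d : ℕ} (f : EuclideanSpace ℝ (Fin d) → ℝ)
    (L₃ : ℝ) (hL₃ : 0 < L₃)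
    (hdiff : ContDiff ℝ 3 f)
    (hlip : ∀ (x₀ δ : EuclideanSpace ℝ (Fin d)), ‖δ‖ = 1 → ∀ θ₁ θ₂ : ℝ,
      |iteratedDeriv 3 (fun θ : ℝ => f (x₀ + θ • δ)) θ₁ -
        iteratedDeriv 3 (fun θ : ℝ => f (x₀ + θ • δ)) θ₂| ≤ L₃ * |θ₁ - θ₂|)
    (α τ : ℝ) (hα : 0 < α) (hτ : 0 < τ)
    (hτle : τ ≤ Real.sqrt (α / (16 * L₃)))
    (ω : ℝ) (hω : ω ∈ Set.Ioo (0 : ℝ) 1)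
    (y₀ yjm yj : EuclideanSpace ℝ (Fin d))
    (h1 : f yjm ≤ f y₀) (h2 : f yj ≤ f y₀)
    (h3 : f ((1 / 2 : ℝ) • (yj + yjm)) ≥ f y₀ - α * τ ^ 2)
    (h4 : f ((3 : ℝ) • yjm - (2 : ℝ) • yj) ≥ f y₀ - α * τ ^ 2)
    (h5 : ‖yj - yjm‖ ≤ 2 * τ) :
    f (yj + ω • (yj - yjm)) ≤ f y₀ + 14 * α * τ ^ 2 :=
  extrapolated_point_value_bound_general f L₃ hL₃ hdiff hlip α τ hτ hτle ω hω y₀ yjm yj h1 h2 h3 h4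
    h5
end
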